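/- arXiv:2601.09947 — 8 statements merged into one kernel-verified Lean document; each statement's English description precedes it below -/
import Mathlib

section
/- Fix an integer q ≥ 2, an integer K ≥ 1 and p ∈ (0,1), and let A be a finite alphabet with |A| = q. For y ∈ A^K let r_i(y) = #{ j : y_j = i } for i ∈ A, and define P(y) = ( p^K / ( q·(q−1)^K ) ) · Σ_{i∈A} w^{r_i(y)}, where w = (1−p)(q−1)/p. Then (with log the natural logarithm): −Σ_{y ∈ A^K} P(y)·log P(y) = ( p^K / ( q·(q−1)^K ) ) · [ q·((q−1)/p)^K · ( K·log((q−1)/p) + log q ) − Φ ], where Φ = Σ_{(r_i)_{i∈A} ∈ ℕ^A, Σ_i r_i = K} ( K! / Π_{i∈A} r_i! ) · ( Σ_{i∈A} w^{r_i} ) · log( Σ_{i∈A} w^{r_i} ). -/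
open scoped BigOperators

/-- Number of occurrences of the symbol `a` in the tuple `y`. -/
def cntY {A : Type*} [DecidableEq A] {K : ℕ} (y : Fin K → A) (a : A) : ℕ :=
  (Finset.univ.filter fun j => y j = a).card

/-- The output distribution of the K-draw q-ary symmetric channel under uniform input. -/
noncomputable def outDist {A : Type*} [Fintype A] [DecidableEq A] (q K : ℕ) (p : ℝ)
    (y : Fin K → A) : ℝ :=
  (p ^ K / ((q : ℝ) * ((q : ℝ) - 1) ^ K)) *
    ∑ i : A, ((1 - p) * ((q : ℝ) - 1) / p) ^ (cntY y i)

section Aux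

variable {A : Type*} [Fintype A] [DecidableEq A] {K : ℕ}

lemma monomial_prod_aux {σ ι : Type*} (s : Finset ι) (g : ι → (σ →₀ ℕ)) :
    ∏ j ∈ s, (MvPolynomial.monomial (g j) (1 : ℕ)) = MvPolynomial.monomial (∑ j ∈ s, g j) 1 := by
  classical
  induction s using Finset.cons_induction with
  | empty => simp
  | cons a s ha ih =>
      rw [Finset.prod_cons, ih, MvPolynomial.monomial_mul, Finset.sum_cons, mul_one]

/-- the finsupp attached to a count vector -/
noncomputable def mFin (r : A → ℕ) : A →₀ ℕ := ∑ a : A, Finsupp.single a (r a)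

lemma mFin_apply (r : A → ℕ) (b : A) : mFin r b = r b := by
  classical
  simp [mFin, Finsupp.finset_sum_apply, Finsupp.single_apply]

lemma mFin_inj {r s : A → ℕ} (h : mFin r = mFin s) : r = s := by
  funext b; rw [← mFin_apply r b, h, mFin_apply]

lemma sum_single_eq_mFin (y : Fin K → A) :
    ∑ j : Fin K, Finsupp.single (y j) (1 : ℕ) = mFin (cntY y) := by
  classical
  ext b
  rw [mFin_apply]
  simp only [Finsupp.finset_sum_apply, Finsupp.single_apply, cntY]
  rw [Finset.card_filter]

lemma card_fiber (r : A → ℕ) (hr : ∑ i : A, r i = K) :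
    (Finset.univ.filter fun y : Fin K → A => cntY y = r).card
      = Nat.multinomial Finset.univ r := by
  classical
  have key1 : ((∑ a : A, (MvPolynomial.X a : MvPolynomial A ℕ)) ^ K)
      = ∑ y : Fin K → A, MvPolynomial.monomial (mFin (cntY y)) 1 := by
    have hpow : ((∑ a : A, (MvPolynomial.X a : MvPolynomial A ℕ)) ^ K)
        = ∏ _j : Fin K, (∑ a : A, (MvPolynomial.X a : MvPolynomial A ℕ)) := by
      simp [Finset.prod_const]
    rw [hpow, Finset.prod_univ_sum, Fintype.piFinset_univ]
    refine Finset.sum_congr rfl fun y _ => ?_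
    calc ∏ j : Fin K, (MvPolynomial.X (y j) : MvPolynomial A ℕ)
        = ∏ j : Fin K, MvPolynomial.monomial (Finsupp.single (y j) 1) (1 : ℕ) := by
          refine Finset.prod_congr rfl fun j _ => ?_
          rw [← MvPolynomial.X_pow_eq_monomial, pow_one]
      _ = MvPolynomial.monomial (∑ j : Fin K, Finsupp.single (y j) 1) 1 :=
          monomial_prod_aux _ _
      _ = _ := by rw [sum_single_eq_mFin]
  have key2 : ((∑ a : A, (MvPolynomial.X a : MvPolynomial A ℕ)) ^ K)
      = ∑ k ∈ Finset.piAntidiag Finset.univ K,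
          (Nat.multinomial Finset.univ k : MvPolynomial A ℕ) *
            MvPolynomial.monomial (mFin k) 1 := by
    rw [Finset.sum_pow_eq_sum_piAntidiag]
    refine Finset.sum_congr rfl fun k _ => ?_
    congr 1
    calc ∏ a : A, (MvPolynomial.X a : MvPolynomial A ℕ) ^ k a
        = ∏ a : A, MvPolynomial.monomial (Finsupp.single a (k a)) (1 : ℕ) := by
          exact Finset.prod_congr rfl fun a _ => MvPolynomial.X_pow_eq_monomial
      _ = MvPolynomial.monomial (mFin k) 1 := monomial_prod_aux _ _
  have hL : MvPolynomial.coeff (mFin r)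
        (∑ y : Fin K → A, MvPolynomial.monomial (mFin (cntY y)) (1 : ℕ))
      = (Finset.univ.filter fun y : Fin K → A => cntY y = r).card := by
    rw [MvPolynomial.coeff_sum, Finset.card_filter]
    refine Finset.sum_congr rfl fun y _ => ?_
    rw [MvPolynomial.coeff_monomial]
    by_cases h : cntY y = r
    · simp [h]
    · rw [if_neg (fun hc => h (mFin_inj hc)), if_neg h]
  have hR : MvPolynomial.coeff (mFin r)
        (∑ k ∈ Finset.piAntidiag Finset.univ K,
          (Nat.multinomial Finset.univ k : MvPolynomial A ℕ) *
            MvPolynomial.monomial (mFin k) 1)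
      = Nat.multinomial Finset.univ r := by
    rw [MvPolynomial.coeff_sum]
    have hterm : ∀ k ∈ Finset.piAntidiag Finset.univ K,
        MvPolynomial.coeff (mFin r)
            ((Nat.multinomial Finset.univ k : MvPolynomial A ℕ) *
              MvPolynomial.monomial (mFin k) 1)
          = if k = r then Nat.multinomial Finset.univ k else 0 := by
      intro k _
      rw [← MvPolynomial.C_eq_coe_nat, MvPolynomial.coeff_C_mul, MvPolynomial.coeff_monomial]
      by_cases h : k = r
      · simp [h]
      · rw [if_neg (fun hc => h (mFin_inj hc)), if_neg h, mul_zero]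
    rw [Finset.sum_congr rfl hterm, Finset.sum_ite_eq']
    rw [if_pos]
    rw [Finset.mem_piAntidiag]
    exact ⟨hr, fun i _ => Finset.mem_univ i⟩
  rw [← hL, key1.symm.trans key2, hR]

lemma sum_counts_eq (y : Fin K → A) : ∑ a : A, cntY y a = K := by
  classical
  have h := Finset.card_eq_sum_card_fiberwise
    (f := y) (s := Finset.univ) (t := Finset.univ) (fun x _ => Finset.mem_univ _)
  simpa [cntY] using h.symm

lemma exchange (F : (A → ℕ) → ℝ) :
    ∑ y : Fin K → A, F (cntY y)
      = ∑ r ∈ (Fintype.piFinset fun _ : A => Finset.range (K + 1)).filter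
            (fun r => ∑ i : A, r i = K),
          ((K.factorial : ℝ) / ∏ i : A, ((r i).factorial : ℝ)) * F r := by
  classical
  have hmaps : ∀ y : Fin K → A, y ∈ (Finset.univ : Finset (Fin K → A)) →
      cntY y ∈ (Fintype.piFinset fun _ : A => Finset.range (K + 1)).filter
        (fun r => ∑ i : A, r i = K) := by
    intro y _
    rw [Finset.mem_filter]
    refine ⟨?_, sum_counts_eq y⟩
    rw [Fintype.mem_piFinset]
    intro a
    rw [Finset.mem_range, Nat.lt_succ_iff]
    calc cntY y a ≤ ∑ b : A, cntY y b :=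
          Finset.single_le_sum (f := cntY y) (fun _ _ => Nat.zero_le _) (Finset.mem_univ a)
      _ = K := sum_counts_eq y
  rw [← Finset.sum_fiberwise_of_maps_to hmaps (fun y => F (cntY y))]
  refine Finset.sum_congr rfl fun r hr => ?_
  rw [Finset.mem_filter] at hr
  have h1 : ∀ y ∈ Finset.univ.filter (fun y : Fin K → A => cntY y = r),
      F (cntY y) = F r := by
    intro y hy; rw [Finset.mem_filter] at hy; rw [hy.2]
  rw [Finset.sum_congr rfl h1, Finset.sum_const, nsmul_eq_mul, card_fiber r hr.2]
  congr 1
  have hspec := Nat.multinomial_spec Finset.univ r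
  rw [hr.2] at hspec
  have hprod : (0:ℝ) < ∏ i : A, ((r i).factorial : ℝ) :=
    Finset.prod_pos fun i _ => by exact_mod_cast (r i).factorial_pos
  rw [eq_div_iff hprod.ne']
  rw [← Nat.cast_prod, ← Nat.cast_mul, mul_comm, hspec]

end Aux

set_option maxHeartbeats 1000000 in
/-- The output entropy H(Y) of the K-draw q-ary symmetric channel under uniform input:
−Σ_y P(y)·log P(y) = (p^K/(q(q−1)^K))·[q((q−1)/p)^K(K log((q−1)/p)+log q) − Φ], where
Φ = Σ_{(r_i), Σ r_i = K} (K!/Π r_i!)·(Σ_i w^{r_i})·log(Σ_i w^{r_i}) with w = (1−p)(q−1)/p. -/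
theorem stmt2 {A : Type*} [Fintype A] [DecidableEq A] (q K : ℕ)
    (hq : 2 ≤ q) (hK : 1 ≤ K) (p : ℝ) (hp : p ∈ Set.Ioo (0 : ℝ) 1)
    (hA : Fintype.card A = q) :
    -∑ y : Fin K → A, outDist q K p y * Real.log (outDist q K p y) =
      (p ^ K / ((q : ℝ) * ((q : ℝ) - 1) ^ K)) *
        ((q : ℝ) * (((q : ℝ) - 1) / p) ^ K *
            ((K : ℝ) * Real.log (((q : ℝ) - 1) / p) + Real.log (q : ℝ)) -
          ∑ r ∈ (Fintype.piFinset fun _ : A => Finset.range (K + 1)).filter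
              (fun r => ∑ i : A, r i = K),
            ((K.factorial : ℝ) / ∏ i : A, ((r i).factorial : ℝ)) *
              (∑ i : A, ((1 - p) * ((q : ℝ) - 1) / p) ^ (r i)) *
              Real.log (∑ i : A, ((1 - p) * ((q : ℝ) - 1) / p) ^ (r i))) := by
  obtain ⟨hp0, hp1⟩ := hp
  have hq2 : (2:ℝ) ≤ (q:ℝ) := by exact_mod_cast hq
  have hq1 : (0:ℝ) < (q:ℝ) - 1 := by linarith
  have hqpos : (0:ℝ) < (q:ℝ) := by linarith
  have hAne : Nonempty A := by
    rw [← Fintype.card_pos_iff, hA]; omega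
  set w : ℝ := (1 - p) * ((q:ℝ) - 1) / p with hw
  set c : ℝ := p ^ K / ((q : ℝ) * ((q : ℝ) - 1) ^ K) with hc
  have hwpos : 0 < w := by
    exact div_pos (by nlinarith) hp0
  have hcpos : 0 < c := by
    rw [hc]; positivity
  have hSpos : ∀ y : Fin K → A, 0 < ∑ i : A, w ^ cntY y i := fun y =>
    Finset.sum_pos (fun i _ => pow_pos hwpos _) Finset.univ_nonempty
  -- Fact 1
  have fact1 : ∑ y : Fin K → A, ∑ i : A, w ^ cntY y i
      = (q:ℝ) * (((q:ℝ)-1)/p) ^ K := by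
    rw [Finset.sum_comm]
    have hone : ∀ i : A, ∑ y : Fin K → A, w ^ cntY y i = (((q:ℝ)-1)/p) ^ K := by
      intro i
      have h1 : ∀ y : Fin K → A, w ^ cntY y i
          = ∏ j : Fin K, (if y j = i then w else 1) := by
        intro y
        rw [cntY, ← Finset.prod_const, Finset.prod_filter]
      have hsum1 : ∑ a : A, (if a = i then w else 1) = ((q:ℝ)-1)/p := by
        have h2 : ∑ a : A, (if a = i then w else 1)
            = ∑ a : A, ((if a = i then (w-1) else 0) + 1) := by
          refine Finset.sum_congr rfl fun a _ => ?_
          split <;> ring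
        rw [h2, Finset.sum_add_distrib, Finset.sum_ite_eq' Finset.univ i (fun _ => w - 1),
          if_pos (Finset.mem_univ i), Finset.sum_const, Finset.card_univ, hA,
          nsmul_eq_mul, mul_one, hw]
        field_simp
        ring
      calc ∑ y : Fin K → A, w ^ cntY y i
          = ∑ y ∈ Fintype.piFinset (fun _ : Fin K => (Finset.univ : Finset A)),
              ∏ j : Fin K, (if y j = i then w else 1) := by
            rw [Fintype.piFinset_univ]; exact Finset.sum_congr rfl fun y _ => h1 y
        _ = ∏ _j : Fin K, ∑ a : A, (if a = i then w else 1) :=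
            (Finset.prod_univ_sum (fun _ : Fin K => (Finset.univ : Finset A))
              (fun _ a => if a = i then w else 1)).symm
        _ = (((q:ℝ)-1)/p) ^ K := by
            rw [Finset.prod_congr rfl (fun j _ => hsum1), Finset.prod_const,
              Finset.card_univ, Fintype.card_fin]
    rw [Finset.sum_congr rfl (fun i _ => hone i), Finset.sum_const, Finset.card_univ, hA,
      nsmul_eq_mul]
  -- Fact 2
  have fact2 : ∑ y : Fin K → A,
        (∑ i : A, w ^ cntY y i) * Real.log (∑ i : A, w ^ cntY y i)
      = ∑ r ∈ (Fintype.piFinset fun _ : A => Finset.range (K + 1)).filter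
            (fun r => ∑ i : A, r i = K),
          ((K.factorial : ℝ) / ∏ i : A, ((r i).factorial : ℝ)) *
            (∑ i : A, w ^ (r i)) * Real.log (∑ i : A, w ^ (r i)) := by
    rw [exchange (fun r : A → ℕ => (∑ i : A, w ^ r i) * Real.log (∑ i : A, w ^ r i))]
    exact Finset.sum_congr rfl fun r _ => by ring
  -- log c
  have hlogc : Real.log c = -((K:ℝ) * Real.log (((q:ℝ)-1)/p) + Real.log (q:ℝ)) := by
    rw [hc, Real.log_div (by positivity) (by positivity),
      Real.log_mul (by positivity) (by positivity), Real.log_pow, Real.log_pow,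
      Real.log_div hq1.ne' hp0.ne']
    push_cast
    ring
  -- expand the entropy sum
  have expand : ∑ y : Fin K → A, outDist q K p y * Real.log (outDist q K p y)
      = Real.log c * c * (∑ y : Fin K → A, ∑ i : A, w ^ cntY y i)
        + c * ∑ y : Fin K → A,
            (∑ i : A, w ^ cntY y i) * Real.log (∑ i : A, w ^ cntY y i) := by
    have hout : ∀ y : Fin K → A, outDist q K p y = c * (∑ i : A, w ^ cntY y i) :=
      fun y => rfl
    rw [Finset.mul_sum, Finset.mul_sum, ← Finset.sum_add_distrib]
    refine Finset.sum_congr rfl fun y _ => ?_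
    rw [hout y, Real.log_mul hcpos.ne' (hSpos y).ne']
    ring
  rw [expand, fact1, fact2, hlogc]
  ring
end

section
/- The probability of the event Erasure_A equals K! · (1−p) · C(q−1, K−1) · ( p/(q−1) )^{K−1}. -/
open scoped BigOperators Classical

/-- Erasure_A: the coordinates of `y` are pairwise distinct and some coordinate equals `c`. -/
def IsErasureA {A : Type*} {K : ℕ} (c : A) (y : Fin K → A) : Prop :=
  Function.Injective y ∧ ∃ j, y j = c

/-- Erasure_B: the coordinates of `y` are pairwise distinct and no coordinate equals `c`. -/
def IsErasureB {A : Type*} {K : ℕ} (c : A) (y : Fin K → A) : Prop :=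
  Function.Injective y ∧ ∀ j, y j ≠ c

/-- Success: some symbol occurs at least twice, strictly more often than every other symbol,
and that symbol equals `c`. -/
def IsSuccess {A : Type*} [DecidableEq A] {K : ℕ} (c : A) (y : Fin K → A) : Prop :=
  2 ≤ cntY y c ∧ ∀ a, a ≠ c → cntY y a < cntY y c

/-- Error: the complement of Erasure_A ∪ Erasure_B ∪ Success. -/
def IsError {A : Type*} [DecidableEq A] {K : ℕ} (c : A) (y : Fin K → A) : Prop :=
  ¬(IsErasureA c y ∨ IsErasureB c y ∨ IsSuccess c y)

/-- Probability of the event `E` for a random vector `Y ∈ A^K` with i.i.d. coordinates,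
each equal to `c` with probability `1 − p` and equal to each other fixed symbol with
probability `p/(q−1)`. -/
noncomputable def prEvent {A : Type*} [Fintype A] [DecidableEq A] (q K : ℕ) (p : ℝ)
    (c : A) (E : (Fin K → A) → Prop) : ℝ :=
  ∑ y : Fin K → A,
    (∏ j : Fin K, (if y j = c then 1 - p else p / ((q : ℝ) - 1))) *
      (if E y then 1 else 0)

/-!
A vector in Erasure_A has exactly one coordinate equal to `c`, so all of them carry the same
weight `(1 - p) (p / (q - 1))^(K - 1)` and it remains to count them. Injective vectors split into
those hitting `c` (Erasure_A) and those avoiding it (Erasure_B), which number `q^(K)` and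
`(q - 1)^(K)` (falling factorials); by Pascal's rule for falling factorials the difference is
`K (q - 1)^(K - 1) = K! C(q - 1, K - 1)`.
-/

open Finset

theorem Nat.descFactorial_succ_add_mul_descFactorial (n k : ℕ) :
    n.descFactorial (k + 1) + (k + 1) * n.descFactorial k = (n + 1).descFactorial (k + 1) := by
  rw [Nat.descFactorial_succ, Nat.succ_descFactorial_succ, ← Nat.add_mul]
  rcases le_or_gt k n with hkn | hnk
  · congr 1
    omega
  · simp [Nat.descFactorial_of_lt hnk]

theorem Fintype.prod_ite_eq_mul_pow_of_injective {ι A M : Type*} [Fintype ι] [DecidableEq A]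
    [CommMonoid M] {y : ι → A} (hy : Function.Injective y) {c : A} {j : ι} (hj : y j = c)
    (a b : M) :
    ∏ i, (if y i = c then a else b) = a * b ^ (Fintype.card ι - 1) := by
  have hrest : ∀ i ∈ ({j}ᶜ : Finset ι), (if y i = c then a else b) = b := fun i hi =>
    if_neg fun hi' => mem_compl.1 hi (mem_singleton.2 (hy (hi'.trans hj.symm)))
  rw [Fintype.prod_eq_mul_prod_compl j, if_pos hj, Finset.prod_congr rfl hrest, Finset.prod_const,
    Finset.card_compl, Finset.card_singleton]

section ErasureCount

variable {A : Type*} [Fintype A] {K : ℕ}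

def erasureBEquivEmbedding (c : A) :
    {y : Fin K → A // IsErasureB c y} ≃ (Fin K ↪ {a : A // a ≠ c}) where
  toFun y := ⟨fun j => ⟨y.1 j, y.2.2 j⟩, fun _ _ h => y.2.1 (congrArg Subtype.val h)⟩
  invFun f := ⟨fun j => f j, fun _ _ h => f.injective (Subtype.ext h), fun j => (f j).2⟩
  left_inv _ := rfl
  right_inv _ := rfl

theorem card_erasureB (c : A) :
    Fintype.card {y : Fin K → A // IsErasureB c y} = (Fintype.card A - 1).descFactorial K := by
  rw [Fintype.card_congr (erasureBEquivEmbedding c), Fintype.card_embedding_eq, Fintype.card_fin,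
    Fintype.card_subtype_compl, Fintype.card_subtype_eq]

theorem card_erasureA_add_card_erasureB (c : A) :
    Fintype.card {y : Fin K → A // IsErasureA c y} +
      Fintype.card {y : Fin K → A // IsErasureB c y} = (Fintype.card A).descFactorial K := by
  have hdisj : Disjoint (IsErasureA (K := K) c) (IsErasureB c) :=
    fun _ hA hB y hy => let ⟨j, hj⟩ := (hA y hy).2; (hB y hy).2 j hj
  rw [← Fintype.card_subtype_or_disjoint _ _ hdisj,
    Fintype.card_congr ((Equiv.subtypeEquivRight fun y => ?_).trans
      (Equiv.subtypeInjectiveEquivEmbedding (Fin K) A)),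
    Fintype.card_embedding_eq, Fintype.card_fin]
  simp only [IsErasureA, IsErasureB, ne_eq, ← not_exists, ← and_or_left, or_not, and_true]

theorem card_erasureA (c : A) (hK : 0 < K) :
    Fintype.card {y : Fin K → A // IsErasureA c y} =
      K.factorial * (Fintype.card A - 1).choose (K - 1) := by
  obtain ⟨k, rfl⟩ := Nat.exists_eq_add_one.2 hK
  obtain ⟨n, hn⟩ := Nat.exists_eq_add_one.2 (Fintype.card_pos_iff.2 ⟨c⟩)
  have hsum := card_erasureA_add_card_erasureB (K := k + 1) c
  rw [card_erasureB, hn, Nat.add_sub_cancel, ← Nat.descFactorial_succ_add_mul_descFactorial,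
    add_comm, Nat.add_left_cancel_iff] at hsum
  rw [hsum, hn, Nat.add_sub_cancel, Nat.add_sub_cancel, Nat.descFactorial_eq_factorial_mul_choose,
    ← mul_assoc, Nat.factorial_succ]

end ErasureCount

theorem stmt4_general {A : Type*} [Fintype A] [DecidableEq A] (q K : ℕ)
    (hK : 2 ≤ K) (p : ℝ)
    (hA : Fintype.card A = q) (c : A) :
    prEvent q K p c (IsErasureA c) =
      (K.factorial : ℝ) * (1 - p) * (Nat.choose (q - 1) (K - 1) : ℝ) *
        (p / ((q : ℝ) - 1)) ^ (K - 1) := by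
  have hweight : ∀ y ∈ univ.filter fun y : Fin K → A => IsErasureA c y,
      ∏ j, (if y j = c then 1 - p else p / ((q : ℝ) - 1)) =
        (1 - p) * (p / ((q : ℝ) - 1)) ^ (K - 1) :=
    fun y hy => by
      obtain ⟨hinj, j, hj⟩ := (mem_filter.1 hy).2
      simpa using Fintype.prod_ite_eq_mul_pow_of_injective hinj hj (1 - p) (p / ((q : ℝ) - 1))
  simp only [prEvent, mul_ite, mul_one, mul_zero]
  rw [← sum_filter, sum_congr rfl hweight, sum_const, nsmul_eq_mul, ← Fintype.card_subtype,
    card_erasureA c (by omega), hA]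
  push_cast
  ring

/-- P(Erasure_A) = K!·(1−p)·C(q−1,K−1)·(p/(q−1))^{K−1}. -/
theorem stmt4 {A : Type*} [Fintype A] [DecidableEq A] (q K : ℕ)
    (hK : 2 ≤ K) (hq : K < q) (p : ℝ) (hp : p ∈ Set.Ioo (0 : ℝ) 1)
    (hA : Fintype.card A = q) (c : A) :
    prEvent q K p c (IsErasureA c) =
      (K.factorial : ℝ) * (1 - p) * (Nat.choose (q - 1) (K - 1) : ℝ) *
        (p / ((q : ℝ) - 1)) ^ (K - 1) :=
  stmt4_general q K hK p hA c
end

section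
/- The probability of the event Success equals Σ_{j=2}^{K} C(K,j) · (1−p)^j · ( p/(q−1) )^{K−j} · Σ_{(r_1,…,r_{q−1})} ( (K−j)! / (r_1!···r_{q−1}!) ), where the inner sum runs over all tuples of nonnegative integers (r_1,…,r_{q−1}) with r_1 + ··· + r_{q−1} = K−j and r_i < j for every i. -/
/-!
Give a word `y ∈ A^K` the weight `(1 - p) ^ j * (p / (q - 1)) ^ (K - j)`, where `j` is its number
of copies of `c`; the probability of an event is then a sum over `j` of the number of its words
with `j` copies of `c` times this weight. A successful word with `j` copies of `c` is a choice of
the `j` positions of `c` together with a word of length `K - j` over the other symbols in which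
every symbol occurs `r a < j` times, and the words with prescribed letter counts `r` are counted
by the multinomial coefficient `(K - j)! / ∏ (r a)!`.
-/

open scoped BigOperators Classical

open Finset MvPolynomial
open scoped Nat

theorem Nat.cast_multinomial {α 𝕜 : Type*} [Field 𝕜] [CharZero 𝕜] (s : Finset α) (f : α → ℕ) :
    (Nat.multinomial s f : 𝕜) = (∑ i ∈ s, f i)! / ∏ i ∈ s, ((f i)! : 𝕜) := by
  rw [eq_div_iff (prod_ne_zero_iff.mpr fun i _ => Nat.cast_ne_zero.mpr (Nat.factorial_ne_zero _)),
    mul_comm]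
  exact_mod_cast Nat.multinomial_spec s f

theorem Nat.multinomial_univ_eq_choose_mul {A : Type*} [Fintype A] [DecidableEq A]
    (n : A → ℕ) (c : A) :
    Nat.multinomial univ n =
      (∑ a, n a).choose (n c) * Nat.multinomial univ (fun a : {a // a ≠ c} => n a) := by
  have hsum : ∑ a ∈ {c}ᶜ, n a = ∑ a : {a // a ≠ c}, n a :=
    sum_subtype _ (by simp) n
  have hprod : ∏ a ∈ {c}ᶜ, (n a)! = ∏ a : {a // a ≠ c}, (n a)! :=
    prod_subtype _ (by simp) _
  rw [← insert_compl_self c, Nat.multinomial_insert (by simp), sum_insert (by simp),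
    Nat.multinomial, Nat.multinomial, hsum, hprod]

theorem card_filter_fiber_card_eq_multinomial {D A : Type*} [Fintype D] [DecidableEq D]
    [Fintype A] [DecidableEq A] (n : A → ℕ) (hn : ∑ a, n a = Fintype.card D) :
    #{f : D → A | ∀ a, #{i | f i = a} = n a} = Nat.multinomial univ n := by
  -- compare the coefficients of `X ^ n` in `(∑ a, X a) ^ |D| = ∑ f, ∏ i, X (f i)`
  set d : A →₀ ℕ := Finsupp.equivFunOnFinite.symm n
  have hfiber (f : D → A) : ∑ i, Finsupp.single (f i) 1 = d ↔ ∀ a, #{i | f i = a} = n a := by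
    simp [Finsupp.ext_iff, Finsupp.finsetSum_apply, Finsupp.single_apply, d]
  have hexpand : (∑ a, X a : MvPolynomial A ℕ) ^ Fintype.card D =
      ∑ f : D → A, monomial (∑ i, Finsupp.single (f i) 1) 1 := by
    simp only [monomial_sum_one, ← X.eq_def, ← Fintype.prod_sum, prod_const, card_univ]
  have hcoeff := coeff_sum_X_pow_of_fintype (R := ℕ) d (Fintype.card D)
  rw [Finsupp.sum_fintype _ _ (fun _ => rfl), if_pos (show ∑ a, d a = _ from hn),
    Finsupp.multinomial_eq_of_support_subset (subset_univ _), hexpand, coeff_sum] at hcoeff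
  simp_rw [coeff_monomial, hfiber] at hcoeff
  simpa [d] using hcoeff

theorem card_filter_fiber_card_eq_choose_mul_multinomial {D A : Type*} [Fintype D]
    [DecidableEq D] [Fintype A] [DecidableEq A] (c : A) (j : ℕ) (r : {a // a ≠ c} → ℕ)
    (hjr : j + ∑ a, r a = Fintype.card D) :
    #{f : D → A | #{i | f i = c} = j ∧ ∀ a : {a // a ≠ c}, #{i | f i = a} = r a} =
      (Fintype.card D).choose j * Nat.multinomial univ r := by
  set n : A → ℕ := fun a => if h : a = c then j else r ⟨a, h⟩
  have hn_ne : (fun a : {a // a ≠ c} => n a) = r := funext fun a => dif_neg a.2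
  have hfilter : ∀ f : D → A, (#{i | f i = c} = j ∧ ∀ a : {a // a ≠ c}, #{i | f i = a} = r a) ↔
      ∀ a, #{i | f i = a} = n a := by
    intro f
    refine ⟨fun ⟨hc, hr⟩ a => ?_, fun h => ⟨by simpa [n] using h c, fun a => ?_⟩⟩
    · by_cases ha : a = c
      · simp [n, ha, hc]
      · simpa [n, ha] using hr ⟨a, ha⟩
    · simpa [n, a.2] using h a
  have hsum : ∑ a, n a = Fintype.card D := by
    rw [Fintype.sum_eq_add_sum_subtype_ne _ c, hn_ne, ← hjr]
    simp [n]
  simp_rw [hfilter, card_filter_fiber_card_eq_multinomial n hsum,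
    Nat.multinomial_univ_eq_choose_mul n c, hn_ne, hsum]
  simp [n]

theorem prod_ite_eq_pow_cntY {A M : Type*} [DecidableEq A] [CommMonoid M] {K : ℕ}
    (y : Fin K → A) (c : A) (α β : M) :
    ∏ j, (if y j = c then α else β) = α ^ cntY y c * β ^ (K - cntY y c) := by
  rw [prod_ite, prod_const, prod_const, filter_not, card_sdiff_of_subset (filter_subset _ _),
    card_univ, Fintype.card_fin, cntY]

theorem prEvent_eq_sum_card {A : Type*} [Fintype A] [DecidableEq A] (q K : ℕ) (p : ℝ) (c : A)
    (E : (Fin K → A) → Prop) (J : Finset ℕ) (hJ : ∀ y, E y → cntY y c ∈ J) :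
    prEvent q K p c E =
      ∑ j ∈ J, #{y | E y ∧ cntY y c = j} * ((1 - p) ^ j * (p / ((q : ℝ) - 1)) ^ (K - j)) := by
  simp_rw [prEvent, prod_ite_eq_pow_cntY, mul_ite, mul_one, mul_zero, ← sum_filter]
  rw [← sum_fiberwise_of_maps_to (fun y hy => hJ y (mem_filter.mp hy).2)]
  refine sum_congr rfl fun j _ => ?_
  rw [filter_filter, ← nsmul_eq_mul, ← sum_const]
  exact sum_congr rfl fun y hy => by rw [(mem_filter.mp hy).2.2]

theorem cntY_add_sum_cntY_ne {A : Type*} [Fintype A] [DecidableEq A] {K : ℕ}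
    (y : Fin K → A) (c : A) : cntY y c + ∑ a : {a // a ≠ c}, cntY y a = K := by
  rw [← Fintype.sum_eq_add_sum_subtype_ne (cntY y) c]
  simpa [cntY] using (card_eq_sum_card_fiberwise fun i (_ : i ∈ univ) => mem_univ (y i)).symm

theorem card_isSuccess_cntY_eq {A : Type*} [Fintype A] [DecidableEq A] {K : ℕ} (c : A) {j : ℕ}
    (hj : 2 ≤ j) (hjK : j ≤ K) :
    #{y : Fin K → A | IsSuccess c y ∧ cntY y c = j} =
      K.choose j * ∑ r ∈ {r ∈ Fintype.piFinset fun _ : {a // a ≠ c} => range j |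
        ∑ a, r a = K - j}, Nat.multinomial univ r := by
  have hmaps : ∀ y ∈ ({y : Fin K → A | IsSuccess c y ∧ cntY y c = j} : Finset _),
      (fun a : {a // a ≠ c} => cntY y a) ∈ {r ∈ Fintype.piFinset fun _ : {a // a ≠ c} => range j |
        ∑ a, r a = K - j} := by
    intro y hy
    obtain ⟨⟨-, hlt⟩, rfl⟩ := (mem_filter.mp hy).2
    simp only [mem_filter, Fintype.mem_piFinset, mem_range]
    exact ⟨fun a => hlt a a.2, by have := cntY_add_sum_cntY_ne y c; omega⟩
  rw [card_eq_sum_card_fiberwise hmaps, mul_sum]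
  refine sum_congr rfl fun r hr => ?_
  simp only [mem_filter, Fintype.mem_piFinset, mem_range] at hr
  obtain ⟨hlt, hsum⟩ := hr
  have hcount := card_filter_fiber_card_eq_choose_mul_multinomial (D := Fin K) c j r
    (by rw [Fintype.card_fin]; omega)
  rw [Fintype.card_fin] at hcount
  rw [← hcount, filter_filter]
  congr 1
  refine filter_congr fun y _ => ⟨fun ⟨⟨_, hc⟩, hr⟩ => ⟨hc, fun a => congrFun hr a⟩, ?_⟩
  rintro ⟨hc, hr⟩
  change cntY y c = j at hc
  change ∀ a : {a // a ≠ c}, cntY y a = r a at hr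
  exact ⟨⟨⟨hc ▸ hj, fun a ha => hc ▸ hr ⟨a, ha⟩ ▸ hlt ⟨a, ha⟩⟩, hc⟩, funext hr⟩

theorem stmt6_general {A : Type*} [Fintype A] [DecidableEq A] (q K : ℕ) (p : ℝ) (c : A) :
    prEvent q K p c (IsSuccess c) =
      ∑ j ∈ Finset.Icc 2 K,
        (Nat.choose K j : ℝ) * (1 - p) ^ j * (p / ((q : ℝ) - 1)) ^ (K - j) *
          ∑ r ∈ (Fintype.piFinset fun _ : {a : A // a ≠ c} => Finset.range j).filter
              (fun r => ∑ i, r i = K - j),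
            (((K - j).factorial : ℝ) / ∏ i, ((r i).factorial : ℝ)) := by
  have hsupport : ∀ y : Fin K → A, IsSuccess c y → cntY y c ∈ Icc 2 K := fun y hy =>
    mem_Icc.mpr ⟨hy.1, by have := cntY_add_sum_cntY_ne y c; omega⟩
  rw [prEvent_eq_sum_card q K p c _ _ hsupport]
  refine sum_congr rfl fun j hj => ?_
  rw [card_isSuccess_cntY_eq c (mem_Icc.mp hj).1 (mem_Icc.mp hj).2, Nat.cast_mul, Nat.cast_sum]
  have hterm : ∀ r ∈ {r ∈ Fintype.piFinset fun _ : {a // a ≠ c} => range j | ∑ a, r a = K - j},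
      (Nat.multinomial univ r : ℝ) = (K - j)! / ∏ a, ((r a)! : ℝ) := fun r hr => by
    rw [Nat.cast_multinomial, (mem_filter.mp hr).2]
  rw [sum_congr rfl hterm]
  ring

/-- P(Success) = Σ_{j=2}^{K} C(K,j)·(1−p)^j·(p/(q−1))^{K−j}·
Σ_{(r_i)_{i≠c}, Σ r_i = K−j, r_i < j} (K−j)!/(Π r_i!). -/
theorem stmt6 {A : Type*} [Fintype A] [DecidableEq A] (q K : ℕ)
    (hK : 2 ≤ K) (hq : K < q) (p : ℝ) (hp : p ∈ Set.Ioo (0 : ℝ) 1)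
    (hA : Fintype.card A = q) (c : A) :
    prEvent q K p c (IsSuccess c) =
      ∑ j ∈ Finset.Icc 2 K,
        (Nat.choose K j : ℝ) * (1 - p) ^ j * (p / ((q : ℝ) - 1)) ^ (K - j) *
          ∑ r ∈ (Fintype.piFinset fun _ : {a : A // a ≠ c} => Finset.range j).filter
              (fun r => ∑ i, r i = K - j),
            (((K - j).factorial : ℝ) / ∏ i, ((r i).factorial : ℝ)) :=
  stmt6_general q K p c
end

section
/- Let x = p(q−K)/(q−1). Then the probability of the event Success satisfies ( 1 − p(K−1)/(q−1) )^{K} − x^{K} − K(1−p)·x^{K−1} ≤ P(Success) ≤ 1 − p^{K} − K(1−p)p^{K−1}. -/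
open scoped BigOperators Classical

/-! Group the outcomes `y` by the set `S` of coordinates equal to `c`. Each outcome in that fibre
has probability `(1-p)^|S| (p/(q-1))^(K-|S|)`; the fibre has `(q-1)^(K-|S|)` elements, and
`(q-1)(q-2)⋯(q-K+|S|) ≥ (q-K)^(K-|S|)` of them have pairwise distinct coordinates off `S`.
Success forces `|S| ≥ 2`, and conversely `|S| ≥ 2` together with distinct coordinates off `S`
forces Success, so both bounds are sums over `|S| ≥ 2` of binomial terms, which the binomial
theorem evaluates. -/

open Finset

theorem Fintype.sum_pow_mul_of_two_le_card {ι R : Type*} [Fintype ι] [CommRing R] (a b : R) :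
    ∑ s : Finset ι with 2 ≤ #s, a ^ #s * b ^ (Fintype.card ι - #s) =
      (a + b) ^ Fintype.card ι - b ^ Fintype.card ι -
        Fintype.card ι * a * b ^ (Fintype.card ι - 1) := by
  have hsmall : ({s | ¬ 2 ≤ #s} : Finset (Finset ι)) =
      powersetCard 0 univ ∪ powersetCard 1 univ := by
    ext s
    simp only [mem_filter, mem_univ, true_and, mem_union, mem_powersetCard, subset_univ]
    omega
  rw [← Fintype.sum_pow_mul_eq_add_pow, ← sum_filter_add_sum_filter_not univ (2 ≤ #·), hsmall,
    sum_union (univ.pairwise_disjoint_powersetCard zero_ne_one),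
    sum_powersetCard 0 univ fun k => a ^ k * b ^ (Fintype.card ι - k),
    sum_powersetCard 1 univ fun k => a ^ k * b ^ (Fintype.card ι - k)]
  simp only [card_univ, Nat.choose_zero_right, pow_zero, tsub_zero, one_mul, one_smul,
    Nat.choose_one_right, pow_one, nsmul_eq_mul]
  ring

theorem prod_ite_eq_of_forall_iff_mem {ι A M : Type*} [Fintype ι] [DecidableEq A] [CommMonoid M]
    {c : A} {S : Finset ι} {y : ι → A} (hy : ∀ j, y j = c ↔ j ∈ S) (u v : M) :
    ∏ j, (if y j = c then u else v) = u ^ #S * v ^ (Fintype.card ι - #S) := by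
  have hfilter : ({j | y j = c} : Finset ι) = S := by ext j; simp [hy]
  rw [prod_ite, prod_const, prod_const, filter_not, hfilter, card_sdiff, card_univ, inter_univ]

section Fibers

variable {ι A : Type*} [DecidableEq ι] (c : A) (S : Finset ι)

def fiberEquiv :
    {y : ι → A // ∀ j, y j = c ↔ j ∈ S} ≃ ({j // j ∉ S} → {a // a ≠ c}) where
  toFun y j := ⟨y.1 j, fun h => j.2 ((y.2 j).1 h)⟩
  invFun z := ⟨fun j => if h : j ∈ S then c else z ⟨j, h⟩, fun j => by
    by_cases h : j ∈ S <;> simp [h, (z ⟨j, _⟩).2]⟩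
  left_inv y := by
    ext j
    by_cases h : j ∈ S
    · simp [h, (y.2 j).2 h]
    · simp [h]
  right_inv z := by
    ext j
    simp [j.2]

theorem fiberEquiv_injective_iff (y : {y : ι → A // ∀ j, y j = c ↔ j ∈ S}) :
    Function.Injective (fiberEquiv c S y) ↔ Set.InjOn y.1 {j | y.1 j ≠ c} := by
  have hS : ∀ j, y.1 j ≠ c ↔ j ∉ S := fun j => (y.2 j).not
  constructor
  · intro h j₁ h₁ j₂ h₂ heq
    simpa using @h ⟨j₁, (hS j₁).1 h₁⟩ ⟨j₂, (hS j₂).1 h₂⟩ (Subtype.ext heq)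
  · intro h j₁ j₂ heq
    exact Subtype.ext (h ((hS j₁).2 j₁.2) ((hS j₂).2 j₂.2) (congrArg Subtype.val heq))

variable [Fintype ι] [Fintype A] [DecidableEq A]

theorem card_fiber_s7 :
    Nat.card {y : ι → A // ∀ j, y j = c ↔ j ∈ S} =
      (Fintype.card A - 1) ^ (Fintype.card ι - #S) := by
  rw [Nat.card_congr (fiberEquiv c S), Nat.card_eq_fintype_card, Fintype.card_fun]
  simp [Fintype.card_subtype_compl]

theorem card_fiber_injOn :
    Nat.card {y : ι → A // (∀ j, y j = c ↔ j ∈ S) ∧ Set.InjOn y {j | y j ≠ c}} =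
      (Fintype.card A - 1).descFactorial (Fintype.card ι - #S) := by
  rw [← Nat.card_congr (Equiv.subtypeSubtypeEquivSubtypeInter _ _),
    Nat.card_congr ((fiberEquiv c S).subtypeEquiv (fiberEquiv_injective_iff c S · |>.symm)),
    Nat.card_congr (Equiv.subtypeInjectiveEquivEmbedding _ _), Nat.card_eq_fintype_card,
    Fintype.card_embedding_eq]
  simp [Fintype.card_subtype_compl]

end Fibers

section Counts

variable {A : Type*} [DecidableEq A] {K : ℕ} (c : A)

theorem cntY_eq_card {y : Fin K → A} {S : Finset (Fin K)} (hy : ∀ j, y j = c ↔ j ∈ S) :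
    cntY y c = #S := by
  rw [cntY]
  congr 1
  ext j
  simp [hy]

theorem isSuccess_of_injOn {y : Fin K → A} (hc : 2 ≤ cntY y c) (hy : Set.InjOn y {j | y j ≠ c}) :
    IsSuccess c y := by
  refine ⟨hc, fun a ha => lt_of_le_of_lt (card_le_one.2 fun j₁ h₁ j₂ h₂ => ?_) hc⟩
  simp only [mem_filter, mem_univ, true_and] at h₁ h₂
  exact hy (by simp [h₁, ha]) (by simp [h₂, ha]) (h₁.trans h₂.symm)

end Counts

section Probability

variable {A : Type*} [Fintype A] [DecidableEq A] (q K : ℕ) (p : ℝ) (c : A)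

theorem prEvent_eq_sum_fiber (E : (Fin K → A) → Prop) :
    prEvent q K p c E = ∑ S : Finset (Fin K), (1 - p) ^ #S * (p / ((q : ℝ) - 1)) ^ (K - #S) *
      Nat.card {y : Fin K → A // (∀ j, y j = c ↔ j ∈ S) ∧ E y} := by
  rw [prEvent, ← sum_fiberwise univ (fun y : Fin K → A => ({j | y j = c} : Finset (Fin K)))]
  refine sum_congr rfl fun S _ => ?_
  have hfiber : ∀ y : Fin K → A, ({j | y j = c} : Finset (Fin K)) = S ↔ ∀ j, y j = c ↔ j ∈ S :=
    fun y => by simp [Finset.ext_iff]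
  simp_rw [hfiber]
  rw [sum_congr rfl fun y hy => by
      rw [prod_ite_eq_of_forall_iff_mem (mem_filter.1 hy).2, Fintype.card_fin],
    ← mul_sum, sum_boole, filter_filter, Nat.card_eq_fintype_card, Fintype.card_subtype]

theorem prEvent_mono (hq : 1 ≤ q) (hp : p ∈ Set.Icc (0 : ℝ) 1) {E F : (Fin K → A) → Prop}
    (hEF : ∀ y, E y → F y) : prEvent q K p c E ≤ prEvent q K p c F := by
  have hr : 0 ≤ p / ((q : ℝ) - 1) := div_nonneg hp.1 (by simp [hq])
  refine sum_le_sum fun y _ => mul_le_mul_of_nonneg_left ?_ ?_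
  · by_cases hE : E y <;> simp [hE, hEF y, apply_ite]
  · exact prod_nonneg fun j _ => by split_ifs <;> linarith [hp.2]

theorem prEvent_two_le_cntY_eq_sum (hA : Fintype.card A = q) (hq : 1 < q) :
    prEvent q K p c (fun y => 2 ≤ cntY y c) =
      ∑ S : Finset (Fin K) with 2 ≤ #S, (1 - p) ^ #S * p ^ (K - #S) := by
  have hq' : (q : ℝ) - 1 ≠ 0 := sub_ne_zero.2 (by exact_mod_cast hq.ne')
  rw [prEvent_eq_sum_fiber, sum_filter]
  refine sum_congr rfl fun S _ => ?_
  split_ifs with hS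
  · have hcount : Nat.card {y : Fin K → A // (∀ j, y j = c ↔ j ∈ S) ∧ 2 ≤ cntY y c} =
        (q - 1) ^ (K - #S) := by
      rw [Nat.card_congr (Equiv.subtypeEquivRight fun y =>
          and_iff_left_of_imp fun hy => (cntY_eq_card c hy).symm ▸ hS),
        card_fiber_s7, hA, Fintype.card_fin]
    rw [hcount, Nat.cast_pow, Nat.cast_pred (by omega), mul_assoc, ← mul_pow,
      div_mul_cancel₀ _ hq']
  · have : IsEmpty {y : Fin K → A // (∀ j, y j = c ↔ j ∈ S) ∧ 2 ≤ cntY y c} :=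
      ⟨fun ⟨_, hy, h2⟩ => hS (cntY_eq_card c hy ▸ h2)⟩
    rw [Nat.card_of_isEmpty, Nat.cast_zero, mul_zero]

theorem sum_le_prEvent_two_le_cntY_injOn (hA : Fintype.card A = q) (hq : K < q)
    (hp : p ∈ Set.Icc (0 : ℝ) 1) :
    ∑ S : Finset (Fin K) with 2 ≤ #S,
        (1 - p) ^ #S * (p * ((q : ℝ) - K) / ((q : ℝ) - 1)) ^ (K - #S) ≤
      prEvent q K p c (fun y => 2 ≤ cntY y c ∧ Set.InjOn y {j | y j ≠ c}) := by
  have hr : 0 ≤ p / ((q : ℝ) - 1) :=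
    div_nonneg hp.1 (sub_nonneg.2 (by exact_mod_cast Nat.one_le_of_lt hq))
  have h1p : 0 ≤ 1 - p := sub_nonneg.2 hp.2
  rw [prEvent_eq_sum_fiber, sum_filter]
  refine sum_le_sum fun S _ => ?_
  split_ifs with hS
  · have hcount : Nat.card {y : Fin K → A // (∀ j, y j = c ↔ j ∈ S) ∧
        2 ≤ cntY y c ∧ Set.InjOn y {j | y j ≠ c}} = (q - 1).descFactorial (K - #S) := by
      rw [Nat.card_congr (Equiv.subtypeEquivRight fun y =>
          and_congr_right fun hy => and_iff_right ((cntY_eq_card c hy).symm ▸ hS)),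
        card_fiber_injOn, hA, Fintype.card_fin]
    have hpow : ((q - K : ℕ) : ℝ) ^ (K - #S) ≤ (q - 1).descFactorial (K - #S) := by
      exact_mod_cast (Nat.pow_le_pow_left (by omega) _).trans (Nat.pow_sub_le_descFactorial _ _)
    rw [hcount, mul_assoc, mul_div_right_comm, mul_pow, ← Nat.cast_sub hq.le]
    exact mul_le_mul_of_nonneg_left (mul_le_mul_of_nonneg_left hpow (pow_nonneg hr _))
      (pow_nonneg h1p _)
  · exact mul_nonneg (mul_nonneg (pow_nonneg h1p _) (pow_nonneg hr _)) (Nat.cast_nonneg _)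

end Probability

/-- With x = p(q−K)/(q−1):
(1 − p(K−1)/(q−1))^K − x^K − K(1−p)x^{K−1} ≤ P(Success) ≤ 1 − p^K − K(1−p)p^{K−1}. -/
theorem stmt7 {A : Type*} [Fintype A] [DecidableEq A] (q K : ℕ)
    (hK : 2 ≤ K) (hq : K < q) (p : ℝ) (hp : p ∈ Set.Ioo (0 : ℝ) 1)
    (hA : Fintype.card A = q) (c : A) :
    (1 - p * ((K : ℝ) - 1) / ((q : ℝ) - 1)) ^ K -
        (p * ((q : ℝ) - (K : ℝ)) / ((q : ℝ) - 1)) ^ K -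
        (K : ℝ) * (1 - p) * (p * ((q : ℝ) - (K : ℝ)) / ((q : ℝ) - 1)) ^ (K - 1) ≤
      prEvent q K p c (IsSuccess c) ∧
    prEvent q K p c (IsSuccess c) ≤
      1 - p ^ K - (K : ℝ) * (1 - p) * p ^ (K - 1) := by
  have hp' : p ∈ Set.Icc (0 : ℝ) 1 := Set.Ioo_subset_Icc_self hp
  have hq1 : 1 < q := by omega
  have hbinom := Fintype.sum_pow_mul_of_two_le_card (ι := Fin K) (R := ℝ)
  simp only [Fintype.card_fin] at hbinom
  have hbase : 1 - p * ((K : ℝ) - 1) / ((q : ℝ) - 1) =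
      (1 - p) + p * ((q : ℝ) - K) / ((q : ℝ) - 1) := by
    have : (q : ℝ) - 1 ≠ 0 := sub_ne_zero.2 (by exact_mod_cast hq1.ne')
    field_simp
    ring
  constructor
  · calc _ = ∑ S : Finset (Fin K) with 2 ≤ #S,
          (1 - p) ^ #S * (p * ((q : ℝ) - K) / ((q : ℝ) - 1)) ^ (K - #S) := by
          rw [hbinom, hbase]
      _ ≤ _ := sum_le_prEvent_two_le_cntY_injOn q K p c hA hq hp'
      _ ≤ _ := prEvent_mono q K p c hq1.le hp' fun y hy => isSuccess_of_injOn c hy.1 hy.2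
  · calc _ ≤ _ := prEvent_mono q K p c hq1.le hp' fun y (hy : IsSuccess c y) => hy.1
      _ = _ := prEvent_two_le_cntY_eq_sum q K p c hA hq1
      _ = _ := by rw [hbinom, sub_add_cancel, one_pow]
end

section
/- The probability of the event Erasure_B satisfies ( p(q−K)/(q−1) )^{K} < P(Erasure_B) < p^{K}. -/
open scoped BigOperators Classical

/-!
Every outcome in Erasure_B avoids `c`, so it has probability exactly `r ^ K` with
`r = p / (q - 1)`, and there are `(q - 1)(q - 2)⋯(q - K)` such outcomes (injections of `Fin K`
into `A \ {c}`). Hence `P(Erasure_B) = (q - 1).descFactorial K * r ^ K`, and for `K ≥ 2` the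
descending factorial lies strictly between `(q - K) ^ K` and `(q - 1) ^ K`.
-/

open Finset

theorem card_isErasureB {A : Type*} [Fintype A] {K : ℕ} (c : A) :
    #{y : Fin K → A | IsErasureB c y} = (Fintype.card A - 1).descFactorial K := by
  let e : {y : Fin K → A // IsErasureB c y} ≃ (Fin K ↪ {a : A // a ≠ c}) :=
    { toFun := fun y => ⟨fun j => ⟨y.1 j, y.2.2 j⟩, fun _ _ h => y.2.1 (congrArg Subtype.val h)⟩
      invFun := fun f => ⟨fun j => f j, fun _ _ h => f.injective (Subtype.ext h), fun j => (f j).2⟩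
      left_inv := fun _ => rfl
      right_inv := fun _ => rfl }
  rw [← Fintype.card_subtype, Fintype.card_congr e, Fintype.card_embedding_eq, Fintype.card_fin,
    Fintype.card_subtype_compl, Fintype.card_subtype_eq]

theorem prEvent_eq_card_mul_of_forall_ne {A : Type*} [Fintype A] [DecidableEq A] (q K : ℕ)
    (p : ℝ) (c : A) (E : (Fin K → A) → Prop) (hE : ∀ y, E y → ∀ j, y j ≠ c) :
    prEvent q K p c E = #{y | E y} * (p / ((q : ℝ) - 1)) ^ K := by
  rw [prEvent, card_filter, Nat.cast_sum, sum_mul]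
  refine sum_congr rfl fun y _ => ?_
  split_ifs with hy
  · simp [prod_congr rfl fun j _ => if_neg (hE y hy j), div_pow]
  · simp

/-- (p(q−K)/(q−1))^K < P(Erasure_B) < p^K. -/
theorem stmt9 {A : Type*} [Fintype A] [DecidableEq A] (q K : ℕ)
    (hK : 2 ≤ K) (hq : K < q) (p : ℝ) (hp : p ∈ Set.Ioo (0 : ℝ) 1)
    (hA : Fintype.card A = q) (c : A) :
    (p * ((q : ℝ) - (K : ℝ)) / ((q : ℝ) - 1)) ^ K < prEvent q K p c (IsErasureB c) ∧
    prEvent q K p c (IsErasureB c) < p ^ K := by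
  have hq1 : (1 : ℝ) < q := by exact_mod_cast (by omega : 1 < q)
  set r := p / ((q : ℝ) - 1)
  have hr : 0 < r ^ K := pow_pos (div_pos hp.1 (by linarith)) K
  have hP : prEvent q K p c (IsErasureB c) = ((q - 1).descFactorial K : ℝ) * r ^ K := by
    rw [prEvent_eq_card_mul_of_forall_ne _ _ _ _ _ fun y hy => hy.2, card_isErasureB, hA]
  have hlow : (p * ((q : ℝ) - K) / ((q : ℝ) - 1)) ^ K = ((q - K : ℕ) : ℝ) ^ K * r ^ K := by
    rw [← mul_pow, Nat.cast_sub hq.le]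
    ring
  have hup : p ^ K = ((q - 1 : ℕ) : ℝ) ^ K * r ^ K := by
    rw [← mul_pow, Nat.cast_sub (by omega), Nat.cast_one, mul_div_cancel₀ _ (by linarith)]
  have hdesc_low : (q - K) ^ K < (q - 1).descFactorial K := by
    simpa [Nat.sub_add_cancel (by omega : 1 ≤ q)] using
      Nat.pow_sub_lt_descFactorial (n := q - 1) hK (by omega)
  have hdesc_up : (q - 1).descFactorial K < (q - 1) ^ K :=
    Nat.descFactorial_lt_pow (by omega) hK
  rw [hP, hlow, hup]
  exact ⟨mul_lt_mul_of_pos_right (by exact_mod_cast hdesc_low) hr,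
    mul_lt_mul_of_pos_right (by exact_mod_cast hdesc_up) hr⟩
end

section
/- Under the multiplicity-matrix construction, the cost C(M) = Σ_{δ∈A} Σ_{j=1}^{n} C(M_{δ,j}+1, 2) satisfies C(M) ≤ (n − E) · C(μK+1, 2) + E · K · C(μ+1, 2), where E = #{ j : max_{δ∈A} cnt_j(δ) = 1 } is the number of columns in which all K reads show pairwise distinct symbols, and C(a,2) = a(a−1)/2 denotes a binomial coefficient. -/
open scoped BigOperators

def cntCol {A : Type*} [DecidableEq A] {K n : ℕ} (y : Fin K → Fin n → A)
    (j : Fin n) (δ : A) : ℕ :=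
  (Finset.univ.filter fun t => y t j = δ).card

def Mmat {A : Type*} [Fintype A] [DecidableEq A] {K n : ℕ} (μ : ℕ)
    (y : Fin K → Fin n → A) (δ : A) (j : Fin n) : ℕ :=
  if 2 ≤ Finset.univ.sup (fun a => cntCol y j a) ∧
      (Finset.univ.filter fun a =>
        cntCol y j a = Finset.univ.sup (fun b => cntCol y j b)).card = 1 then
    (if cntCol y j δ = Finset.univ.sup (fun b => cntCol y j b) then μ * K else 0)
  else μ * cntCol y j δ

lemma pascal2 (b : ℕ) : Nat.choose (b + 1 + 1) 2 = Nat.choose (b + 1) 2 + (b + 1) := by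
  have h1 : Nat.choose (b + 1 + 1) 2 = Nat.choose (b + 1) 1 + Nat.choose (b + 1) 2 :=
    Nat.choose_succ_succ (b + 1) 1
  rw [h1, Nat.choose_one_right, Nat.add_comm]

lemma f_add (a b : ℕ) :
    Nat.choose (a + 1) 2 + Nat.choose (b + 1) 2 ≤ Nat.choose (a + b + 1) 2 := by
  induction b with
  | zero => simp
  | succ b ih =>
    show Nat.choose (a + 1) 2 + Nat.choose (b + 1 + 1) 2 ≤ Nat.choose (a + b + 1 + 1) 2
    have h1 := pascal2 b
    have h2 := pascal2 (a + b)
    omega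

lemma sum_f_le {ι : Type*} (s : Finset ι) (g : ι → ℕ) :
    ∑ i ∈ s, Nat.choose (g i + 1) 2 ≤ Nat.choose ((∑ i ∈ s, g i) + 1) 2 := by
  induction s using Finset.cons_induction with
  | empty => simp
  | cons a s ha ih =>
    rw [Finset.sum_cons, Finset.sum_cons]
    exact (Nat.add_le_add_left ih _).trans (f_add _ _)

lemma cnt_sum {A : Type*} [Fintype A] [DecidableEq A] {K n : ℕ}
    (y : Fin K → Fin n → A) (j : Fin n) : ∑ δ : A, cntCol y j δ = K := by
  have := Finset.card_eq_sum_card_fiberwise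
      (s := (Finset.univ : Finset (Fin K))) (t := (Finset.univ : Finset A))
      (f := fun t => y t j) (fun t _ => Finset.mem_univ _)
  simpa [cntCol] using this.symm

/-- The cost C(M) = Σ_{δ,j} C(M_{δ,j}+1, 2) of the multiplicity matrix satisfies
C(M) ≤ (n − E)·C(μK+1,2) + E·K·C(μ+1,2), where E is the number of columns in which all K
reads show pairwise distinct symbols (i.e. the maximal count is 1). -/
theorem stmt14 {A : Type*} [Fintype A] [DecidableEq A] (q n K μ : ℕ)
    (hA : Fintype.card A = q) (hn : 1 ≤ n) (hμ : 1 ≤ μ) (hK : 2 ≤ K) (hKq : K ≤ q)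
    (y : Fin K → Fin n → A) :
    ∑ δ : A, ∑ j : Fin n, Nat.choose (Mmat μ y δ j + 1) 2 ≤
      (n - (Finset.univ.filter fun j : Fin n =>
            Finset.univ.sup (fun a => cntCol y j a) = 1).card) *
          Nat.choose (μ * K + 1) 2 +
        (Finset.univ.filter fun j : Fin n =>
            Finset.univ.sup (fun a => cntCol y j a) = 1).card *
          K * Nat.choose (μ + 1) 2 := by
  classical
  rw [Finset.sum_comm]
  have hcol : ∀ j : Fin n,
      ∑ δ : A, Nat.choose (Mmat μ y δ j + 1) 2 ≤
        if Finset.univ.sup (fun a => cntCol y j a) = 1 then K * Nat.choose (μ + 1) 2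
        else Nat.choose (μ * K + 1) 2 := by
    intro j
    by_cases hpj : Finset.univ.sup (fun a => cntCol y j a) = 1
    · rw [if_pos hpj]
      have hcond : ¬ (2 ≤ Finset.univ.sup (fun a => cntCol y j a) ∧
          (Finset.univ.filter fun a =>
            cntCol y j a = Finset.univ.sup (fun b => cntCol y j b)).card = 1) := by
        simp [hpj]
      have hM : ∀ δ : A, Mmat μ y δ j = μ * cntCol y j δ := by
        intro δ; rw [Mmat, if_neg hcond]
      calc ∑ δ : A, Nat.choose (Mmat μ y δ j + 1) 2
          ≤ ∑ δ : A, cntCol y j δ * Nat.choose (μ + 1) 2 := by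
            apply Finset.sum_le_sum
            intro δ _
            rw [hM δ]
            have hle : cntCol y j δ ≤ 1 := by
              have h := Finset.le_sup (f := fun a => cntCol y j a) (Finset.mem_univ δ)
              simp only [hpj] at h
              exact h
            interval_cases h : cntCol y j δ <;> simp
        _ = K * Nat.choose (μ + 1) 2 := by
            rw [← Finset.sum_mul, cnt_sum]
    · rw [if_neg hpj]
      have hMsum : ∑ δ : A, Mmat μ y δ j = μ * K := by
        by_cases hcond : 2 ≤ Finset.univ.sup (fun a => cntCol y j a) ∧
            (Finset.univ.filter fun a =>
              cntCol y j a = Finset.univ.sup (fun b => cntCol y j b)).card = 1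
        · have hM : ∀ δ : A, Mmat μ y δ j =
              if cntCol y j δ = Finset.univ.sup (fun b => cntCol y j b) then μ * K else 0 := by
            intro δ; rw [Mmat, if_pos hcond]
          rw [Finset.sum_congr rfl (fun δ _ => hM δ), ← Finset.sum_filter,
            Finset.sum_const, hcond.2, one_smul]
        · have hM : ∀ δ : A, Mmat μ y δ j = μ * cntCol y j δ := by
            intro δ; rw [Mmat, if_neg hcond]
          rw [Finset.sum_congr rfl (fun δ _ => hM δ), ← Finset.mul_sum, cnt_sum]
      calc ∑ δ : A, Nat.choose (Mmat μ y δ j + 1) 2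
          ≤ Nat.choose ((∑ δ : A, Mmat μ y δ j) + 1) 2 := sum_f_le _ _
        _ = Nat.choose (μ * K + 1) 2 := by rw [hMsum]
  calc ∑ j : Fin n, ∑ δ : A, Nat.choose (Mmat μ y δ j + 1) 2
      ≤ ∑ j : Fin n, (if Finset.univ.sup (fun a => cntCol y j a) = 1 then
          K * Nat.choose (μ + 1) 2 else Nat.choose (μ * K + 1) 2) :=
        Finset.sum_le_sum (fun j _ => hcol j)
    _ = (Finset.univ.filter fun j : Fin n =>
          Finset.univ.sup (fun a => cntCol y j a) = 1).card * (K * Nat.choose (μ + 1) 2) +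
        (Finset.univ.filter fun j : Fin n =>
          ¬ Finset.univ.sup (fun a => cntCol y j a) = 1).card * Nat.choose (μ * K + 1) 2 := by
        rw [Finset.sum_ite, Finset.sum_const, Finset.sum_const]
        simp [mul_comm]
    _ ≤ _ := by
        have hcards := Finset.card_filter_add_card_filter_not
          (s := (Finset.univ : Finset (Fin n)))
          (p := fun j : Fin n => Finset.univ.sup (fun a => cntCol y j a) = 1)
        rw [Finset.card_univ, Fintype.card_fin] at hcards
        have hneg : (Finset.univ.filter fun j : Fin n =>
            ¬ Finset.univ.sup (fun a => cntCol y j a) = 1).card =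
            n - (Finset.univ.filter fun j : Fin n =>
              Finset.univ.sup (fun a => cntCol y j a) = 1).card := by omega
        rw [hneg, mul_assoc]
        omega
end

section
/- Let K ≥ 2 be an integer and p ∈ (0,1) with p ≤ K^{−1/(K−1)}. Set α = p^{K} + K(1−p)p^{K−1} and B = 1 − p^{K} − (K−1)(1−p)p^{K−1}. Then for every real R with 0 ≤ R ≤ K·B² / ( 1 + (K−1)(1−α) ), both of the following hold: (i) K·B² ≥ R·( 1 + (K−1)(1−α) ); (ii) K·B ≥ α + R·K·(1−α). -/
set_option maxHeartbeats 1000000 in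

/-- Asymptotic achievability conditions for the rate threshold: for K ≥ 2,
p ∈ (0,1) with p ≤ K^{−1/(K−1)}, α = p^K + K(1−p)p^{K−1} and
B = 1 − p^K − (K−1)(1−p)p^{K−1}, every rate 0 ≤ R ≤ K·B²/(1 + (K−1)(1−α)) satisfies
(i) K·B² ≥ R·(1 + (K−1)(1−α)) and (ii) K·B ≥ α + R·K·(1−α). -/
theorem stmt16 (K : ℕ) (hK : 2 ≤ K) (p : ℝ) (hp : p ∈ Set.Ioo (0 : ℝ) 1)
    (hpK : p ≤ (K : ℝ) ^ (-(1 : ℝ) / ((K : ℝ) - 1))) (R : ℝ) (hR0 : 0 ≤ R)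
    (hR : R ≤ (K : ℝ) * (1 - p ^ K - ((K : ℝ) - 1) * (1 - p) * p ^ (K - 1)) ^ 2 /
        (1 + ((K : ℝ) - 1) *
          (1 - (p ^ K + (K : ℝ) * (1 - p) * p ^ (K - 1))))) :
    (K : ℝ) * (1 - p ^ K - ((K : ℝ) - 1) * (1 - p) * p ^ (K - 1)) ^ 2 ≥
        R * (1 + ((K : ℝ) - 1) * (1 - (p ^ K + (K : ℝ) * (1 - p) * p ^ (K - 1)))) ∧
    (K : ℝ) * (1 - p ^ K - ((K : ℝ) - 1) * (1 - p) * p ^ (K - 1)) ≥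
        (p ^ K + (K : ℝ) * (1 - p) * p ^ (K - 1)) +
          R * (K : ℝ) * (1 - (p ^ K + (K : ℝ) * (1 - p) * p ^ (K - 1))) := by
  obtain ⟨hp0, hp1⟩ := hp
  have hK1 : (1:ℝ) ≤ (K:ℝ) := by exact_mod_cast Nat.one_le_of_lt hK
  have hK2 : (2:ℝ) ≤ (K:ℝ) := by exact_mod_cast hK
  have hKpos : (0:ℝ) < (K:ℝ) := by linarith
  have hcast : ((K - 1 : ℕ) : ℝ) = (K:ℝ) - 1 := by
    push_cast [Nat.cast_sub (Nat.one_le_of_lt hK)]; ring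
  have hu : (K:ℝ) * p ^ (K - 1) ≤ 1 := by
    have h1 : p ^ (K-1) ≤ ((K:ℝ) ^ (-(1:ℝ)/((K:ℝ)-1))) ^ (K-1) :=
      pow_le_pow_left₀ hp0.le hpK _
    have h2 : ((K:ℝ) ^ (-(1:ℝ)/((K:ℝ)-1))) ^ (K-1) = (K:ℝ) ^ (-1:ℝ) := by
      rw [← Real.rpow_natCast ((K:ℝ) ^ (-(1:ℝ)/((K:ℝ)-1))) (K-1),
        ← Real.rpow_mul hKpos.le, hcast]
      congr 1
      have hKm1 : ((K:ℝ) - 1) ≠ 0 := by linarith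
      field_simp
    rw [h2, Real.rpow_neg_one] at h1
    rw [← le_div_iff₀' hKpos, one_div]
    exact h1
  have hpow : p ^ K = p * p ^ (K - 1) := by
    conv_lhs => rw [← Nat.sub_add_cancel (Nat.one_le_of_lt hK), pow_succ]
    ring
  set u := p ^ (K - 1) with hudef
  have hu0 : 0 < u := pow_pos hp0 _
  rw [hpow]
  rw [hpow] at hR
  set c := (K:ℝ)
  clear_value u c
  clear hpK hpow hudef hcast hK
  have hcm1 : (0:ℝ) ≤ c - 1 := by linarith
  have hcm2 : (0:ℝ) ≤ c - 2 := by linarith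
  have h1p : (0:ℝ) ≤ 1 - p := by linarith
  have ha : 0 ≤ p * u + c * (1 - p) * u := by
    have := mul_pos hp0 hu0
    have := mul_nonneg (mul_nonneg hKpos.le h1p) hu0.le
    linarith
  have ht : 0 ≤ 1 - (p * u + c * (1 - p) * u) := by
    nlinarith [mul_nonneg (mul_nonneg hcm1 hp0.le) hu0.le]
  have hD : (0:ℝ) < 1 + (c - 1) * (1 - (p * u + c * (1 - p) * u)) := by
    nlinarith [mul_nonneg hcm1 ht]
  have hi : c * (1 - p * u - (c - 1) * (1 - p) * u) ^ 2 ≥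
      R * (1 + (c - 1) * (1 - (p * u + c * (1 - p) * u))) :=
    (le_div_iff₀ hD).mp hR
  refine ⟨hi, ?_⟩
  have hcBD : c * (1 - p * u - (c - 1) * (1 - p) * u) ≤
      1 + (c - 1) * (1 - (p * u + c * (1 - p) * u)) := by
    nlinarith [mul_pos hp0 hu0]
  have hcB1 : 1 ≤ c * (1 - p * u - (c - 1) * (1 - p) * u) := by
    nlinarith [mul_nonneg hcm1 (by linarith : (0:ℝ) ≤ 1 - c * u),
      mul_nonneg (mul_nonneg hcm2 hp0.le) (mul_nonneg hKpos.le hu0.le)]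
  have hcB0 : 0 ≤ c * (1 - p * u - (c - 1) * (1 - p) * u) := by linarith
  have hh1 : 0 ≤ (c * (1 - p * u - (c - 1) * (1 - p) * u)) *
      (1 - (p * u + c * (1 - p) * u)) *
      ((1 + (c - 1) * (1 - (p * u + c * (1 - p) * u))) -
        c * (1 - p * u - (c - 1) * (1 - p) * u)) :=
    mul_nonneg (mul_nonneg hcB0 ht) (by linarith)
  have hh2 : 0 ≤ (1 + (c - 1) * (1 - (p * u + c * (1 - p) * u))) *
      (p * u + c * (1 - p) * u) *
      (c * (1 - p * u - (c - 1) * (1 - p) * u) - 1) :=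
    mul_nonneg (mul_nonneg hD.le ha) (by linarith)
  have hF : (1 + (c - 1) * (1 - (p * u + c * (1 - p) * u))) *
      (c * (1 - p * u - (c - 1) * (1 - p) * u) - (p * u + c * (1 - p) * u)) ≥
      c ^ 2 * (1 - p * u - (c - 1) * (1 - p) * u) ^ 2 *
        (1 - (p * u + c * (1 - p) * u)) := by
    linarith [hh1, hh2]
  have hct : 0 ≤ c * (1 - (p * u + c * (1 - p) * u)) := mul_nonneg hKpos.le ht
  have hRi := mul_le_mul_of_nonneg_right hi hct
  by_contra hcon
  push_neg at hcon
  have hX : (0:ℝ) <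
      (p * u + c * (1 - p) * u) + R * c * (1 - (p * u + c * (1 - p) * u)) -
        c * (1 - p * u - (c - 1) * (1 - p) * u) := by linarith
  linarith [mul_pos hD hX, hF, hRi]
end

section
/- Fix an integer K ≥ 2, p ∈ (0,1), and R ∈ (0,1) with R < 1 − p^{K} − K(1−p)p^{K−1}. Let (q_n)_{n≥1} be any sequence of integers with q_n > K for all n and q_n → ∞, and for each n let x^{(n)} be any transmitted word of length n over an alphabet of size q_n, with the K-draw observation model and per-position counts Num_Error, Num_Erasure_A, Num_Erasure_B defined as below. Then P( 2·Num_Error + Num_Erasure_A + Num_Erasure_B ≤ n − ⌈Rn⌉ ) → 1 as n → ∞. -/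
open scoped BigOperators Classical

/-- Number of positions `i` where the receiver's K observations `y i` fall in the event `E`
relative to the transmitted symbol `x i`. -/
noncomputable def numEvent {A : Type*} {K n : ℕ} (x : Fin n → A)
    (y : Fin n → Fin K → A) (E : A → (Fin K → A) → Prop) : ℕ :=
  (Finset.univ.filter fun i => E (x i) (y i)).card

/-- the per-symbol weight -/
noncomputable def wgt (q : ℕ) (p : ℝ) (c a : Fin q) : ℝ := if a = c then 1 - p else p / ((q : ℝ) - 1)

/-- the per-position penalty 2·1_Err + 1_A + 1_B -/
noncomputable def Zfun {q K : ℕ} (c : Fin q) (v : Fin K → Fin q) : ℝ :=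
  2 * (if IsError c v then (1:ℝ) else 0) + (if IsErasureA c v then (1:ℝ) else 0)
    + (if IsErasureB c v then (1:ℝ) else 0)

section wgt
variable {q : ℕ} {p : ℝ} (c : Fin q)

lemma qsub1_pos (hq : 2 ≤ q) : (0:ℝ) < (q:ℝ) - 1 := by
  have : (2:ℝ) ≤ q := by exact_mod_cast hq
  linarith

lemma wgt_nonneg (hq : 2 ≤ q) (hp0 : 0 ≤ p) (hp1 : p ≤ 1) (a : Fin q) : 0 ≤ wgt q p c a := by
  unfold wgt
  split_ifs
  · linarith
  · exact div_nonneg hp0 (le_of_lt (qsub1_pos hq))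

lemma wgt_sum (hq : 2 ≤ q) : ∑ a, wgt q p c a = 1 := by
  have hne : ((q:ℝ) - 1) ≠ 0 := ne_of_gt (qsub1_pos hq)
  have : ∀ a : Fin q, wgt q p c a
      = p / ((q:ℝ) - 1) + (if a = c then (1 - p) - p / ((q:ℝ) - 1) else 0) := by
    intro a; unfold wgt; split_ifs <;> ring
  rw [Finset.sum_congr rfl (fun a _ => this a), Finset.sum_add_distrib,
    Finset.sum_const, Finset.sum_ite_eq' Finset.univ c]
  simp only [Finset.mem_univ, if_true, Finset.card_univ, Fintype.card_fin, nsmul_eq_mul]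
  field_simp
  ring

lemma wgt_sum_eqc : ∑ a, wgt q p c a * (if a = c then (1:ℝ) else 0) = 1 - p := by
  simp only [mul_ite, mul_one, mul_zero]
  rw [Finset.sum_ite_eq' Finset.univ c (wgt q p c)]
  simp [wgt]

lemma wgt_sum_eq (a₀ : Fin q) :
    ∑ a, wgt q p c a * (if a = a₀ then (1:ℝ) else 0) = wgt q p c a₀ := by
  simp only [mul_ite, mul_one, mul_zero]
  rw [Finset.sum_ite_eq' Finset.univ a₀ (wgt q p c)]
  simp

lemma wgt_sum_nec (hq : 2 ≤ q) :
    ∑ a, wgt q p c a * (if a = c then (0:ℝ) else 1) = p := by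
  have h : ∀ a : Fin q, wgt q p c a * (if a = c then (0:ℝ) else 1)
      = wgt q p c a - wgt q p c a * (if a = c then (1:ℝ) else 0) := by
    intro a; split_ifs <;> ring
  rw [Finset.sum_congr rfl (fun a _ => h a), Finset.sum_sub_distrib, wgt_sum c hq,
    wgt_sum_eqc c]
  ring

end wgt

section logic
variable {q K : ℕ}

lemma erasureA_unique (c : Fin q) (v : Fin K → Fin q) (h : IsErasureA c v) :
    ∃ j₀, v j₀ = c ∧ ∀ j, j ≠ j₀ → v j ≠ c := by
  obtain ⟨hinj, j₀, hj₀⟩ := h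
  exact ⟨j₀, hj₀, fun j hj hvj => hj (hinj (hvj.trans hj₀.symm))⟩

lemma error_collision (c : Fin q) (v : Fin K → Fin q) (h : IsError c v) :
    ∃ j j' : Fin K, j ≠ j' ∧ v j = v j' ∧ v j ≠ c := by
  by_contra hcol
  push_neg at hcol
  apply h
  by_cases hc : ∃ j₀, v j₀ = c
  · obtain ⟨j₀, hj₀⟩ := hc
    by_cases h2 : ∃ j₁, j₁ ≠ j₀ ∧ v j₁ = c
    · obtain ⟨j₁, hj₁ne, hj₁⟩ := h2
      right; right
      constructor
      · exact Finset.one_lt_card.mpr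
          ⟨j₀, by simp [cntY, hj₀], j₁, by simp [cntY, hj₁], hj₁ne.symm⟩
      · intro a ha
        have hle : cntY v a ≤ 1 := by
          apply Finset.card_le_one.mpr
          intro j hj j' hj'
          simp only [Finset.mem_filter, Finset.mem_univ, true_and] at hj hj'
          by_contra hne
          exact ha (hj ▸ hcol j j' hne (hj.trans hj'.symm))
        have h2le : 2 ≤ cntY v c := Finset.one_lt_card.mpr
          ⟨j₀, by simp [cntY, hj₀], j₁, by simp [cntY, hj₁], hj₁ne.symm⟩
        omega
    · push_neg at h2
      left
      refine ⟨?_, j₀, hj₀⟩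
      intro a b hab
      by_contra hne
      have hva : v a = c := hcol a b hne hab
      have ha : a = j₀ := by
        by_contra h'; exact h2 a h' hva
      have hb : b = j₀ := by
        by_contra h'; exact h2 b h' (hab ▸ hva)
      exact hne (ha.trans hb.symm)
  · push_neg at hc
    right; left
    refine ⟨?_, hc⟩
    intro a b hab
    by_contra hne
    exact hc a (hcol a b hne hab)

lemma Zfun_nonneg (c : Fin q) (v : Fin K → Fin q) : 0 ≤ Zfun c v := by
  unfold Zfun; positivity

lemma Zfun_le_two (c : Fin q) (v : Fin K → Fin q) : Zfun c v ≤ 2 := by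
  unfold Zfun
  by_cases h1 : IsError c v
  · have hA : ¬ IsErasureA c v := fun h => h1 (Or.inl h)
    have hB : ¬ IsErasureB c v := fun h => h1 (Or.inr (Or.inl h))
    simp [h1, hA, hB]
  · simp only [h1, if_false]
    split_ifs <;> norm_num

end logic

open Finset in
lemma my_master {ι B : Type*} [Fintype ι] [DecidableEq ι] [Fintype B] (u h : ι → B → ℝ) :
    ∑ y : ι → B, (∏ i, u i (y i)) * ∏ i, h i (y i) = ∏ i, ∑ v, u i v * h i v := by
  rw [Fintype.prod_sum (fun i v => u i v * h i v)]
  exact sum_congr rfl fun y _ => (prod_mul_distrib).symm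

open Finset in
lemma my_marg1 {ι B : Type*} [Fintype ι] [DecidableEq ι] [Fintype B]
    (u : ι → B → ℝ) (hu : ∀ i, ∑ v, u i v = 1) (i₀ : ι) (f : B → ℝ) :
    ∑ y : ι → B, (∏ i, u i (y i)) * f (y i₀) = ∑ v, u i₀ v * f v := by
  calc ∑ y : ι → B, (∏ i, u i (y i)) * f (y i₀)
      = ∑ y : ι → B, (∏ i, u i (y i)) * ∏ i, (if i = i₀ then f (y i) else 1) := by
        refine sum_congr rfl fun y _ => ?_
        rw [prod_ite_eq' Finset.univ i₀ (fun i => f (y i))]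
        simp
    _ = ∏ i, ∑ v, u i v * (if i = i₀ then f v else 1) := my_master u (fun i v => if i = i₀ then f v else 1)
    _ = ∑ v, u i₀ v * f v := by
        rw [Finset.prod_eq_single i₀]
        · simp
        · intro i _ hi
          simpa [hi] using hu i
        · simp

open Finset in
lemma my_marg2 {ι B : Type*} [Fintype ι] [DecidableEq ι] [Fintype B]
    (u : ι → B → ℝ) (hu : ∀ i, ∑ v, u i v = 1) {i₀ i₁ : ι} (hne : i₀ ≠ i₁)
    (f g : B → ℝ) :
    ∑ y : ι → B, (∏ i, u i (y i)) * (f (y i₀) * g (y i₁)) =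
      (∑ v, u i₀ v * f v) * (∑ v, u i₁ v * g v) := by
  have key : ∀ (F G : ι → ℝ),
      (∏ i, (if i = i₀ then F i else if i = i₁ then G i else 1)) = F i₀ * G i₁ := by
    intro F G
    rw [← Finset.prod_subset (Finset.subset_univ ({i₀, i₁} : Finset ι))
      (by intro i _ hi
          simp only [mem_insert, mem_singleton] at hi
          push_neg at hi
          simp [hi.1, hi.2])]
    rw [Finset.prod_pair hne]
    simp [hne, hne.symm]
  calc ∑ y : ι → B, (∏ i, u i (y i)) * (f (y i₀) * g (y i₁))
      = ∑ y : ι → B, (∏ i, u i (y i)) *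
          ∏ i, (if i = i₀ then f (y i) else if i = i₁ then g (y i) else 1) := by
        refine sum_congr rfl fun y _ => ?_
        rw [key (fun i => f (y i)) (fun i => g (y i))]
    _ = ∏ i, ∑ v, u i v * (if i = i₀ then f v else if i = i₁ then g v else 1) :=
        my_master u (fun i v => if i = i₀ then f v else if i = i₁ then g v else 1)
    _ = (∑ v, u i₀ v * f v) * (∑ v, u i₁ v * g v) := by
        rw [← Finset.prod_subset (Finset.subset_univ ({i₀, i₁} : Finset ι))
          (by intro i _ hi
              simp only [mem_insert, mem_singleton] at hi
              push_neg at hi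
              simp [hi.1, hi.2, hu i])]
        rw [Finset.prod_pair hne]
        simp [hne, hne.symm]

section prob
variable {q K : ℕ} {p : ℝ}

lemma prodw_nonneg (hq : 2 ≤ q) (hp0 : 0 ≤ p) (hp1 : p ≤ 1) (c : Fin q) (v : Fin K → Fin q) :
    0 ≤ ∏ j, wgt q p c (v j) :=
  Finset.prod_nonneg fun j _ => wgt_nonneg c hq hp0 hp1 (v j)

lemma sum_prodw (hq : 2 ≤ q) (c : Fin q) :
    ∑ v : Fin K → Fin q, ∏ j, wgt q p c (v j) = 1 := by
  rw [← Fintype.prod_sum (fun (_ : Fin K) (a : Fin q) => wgt q p c a)]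
  simp [wgt_sum c hq]

lemma prod_if_single {K : ℕ} (j₀ : Fin K) (X Z : ℝ) :
    ∏ j : Fin K, (if j = j₀ then X else Z) = X * Z ^ (K - 1) := by
  rw [← Finset.mul_prod_erase Finset.univ _ (Finset.mem_univ j₀), if_pos rfl]
  congr 1
  rw [Finset.prod_congr rfl (fun j hj => if_neg (Finset.ne_of_mem_erase hj)),
    Finset.prod_const, Finset.card_erase_of_mem (Finset.mem_univ _), Finset.card_univ,
    Fintype.card_fin]

lemma ite01_nonneg (P : Prop) [Decidable P] : (0:ℝ) ≤ if P then 1 else 0 := by split_ifs <;> norm_num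

lemma prA_le (hq : 2 ≤ q) (hp0 : 0 ≤ p) (hp1 : p ≤ 1) (c : Fin q) :
    ∑ v : Fin K → Fin q, (∏ j, wgt q p c (v j)) * (if IsErasureA c v then (1:ℝ) else 0)
      ≤ K * ((1 - p) * p ^ (K - 1)) := by
  have hind : ∀ v : Fin K → Fin q, (if IsErasureA c v then (1:ℝ) else 0) ≤
      ∑ j₀ : Fin K, ∏ j, (if j = j₀ then (if v j = c then (1:ℝ) else 0)
        else (if v j = c then (0:ℝ) else 1)) := by
    intro v
    have hnn : ∀ j₀ : Fin K, (0:ℝ) ≤ ∏ j, (if j = j₀ then (if v j = c then (1:ℝ) else 0)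
        else (if v j = c then (0:ℝ) else 1)) := by
      intro j₀
      apply Finset.prod_nonneg
      intro j _
      split_ifs <;> norm_num
    split_ifs with hA
    · obtain ⟨j₀, h1, h2⟩ := erasureA_unique c v hA
      have hterm : (∏ j, (if j = j₀ then (if v j = c then (1:ℝ) else 0)
          else (if v j = c then (0:ℝ) else 1))) = 1 := by
        apply Finset.prod_eq_one
        intro j _
        by_cases hj : j = j₀
        · subst hj; simp [h1]
        · simp [hj, h2 j hj]
      calc (1:ℝ) = _ := hterm.symm
        _ ≤ _ := Finset.single_le_sum (fun j _ => hnn j) (Finset.mem_univ j₀)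
    · exact Finset.sum_nonneg fun j _ => hnn j
  calc ∑ v : Fin K → Fin q, (∏ j, wgt q p c (v j)) * (if IsErasureA c v then (1:ℝ) else 0)
      ≤ ∑ v : Fin K → Fin q, (∏ j, wgt q p c (v j)) *
          ∑ j₀ : Fin K, ∏ j, (if j = j₀ then (if v j = c then (1:ℝ) else 0)
            else (if v j = c then (0:ℝ) else 1)) :=
        Finset.sum_le_sum fun v _ =>
          mul_le_mul_of_nonneg_left (hind v) (prodw_nonneg hq hp0 hp1 c v)
    _ = ∑ j₀ : Fin K, ∑ v : Fin K → Fin q, (∏ j, wgt q p c (v j)) *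
          ∏ j, (if j = j₀ then (if v j = c then (1:ℝ) else 0)
            else (if v j = c then (0:ℝ) else 1)) := by
        rw [Finset.sum_comm]
        exact Finset.sum_congr rfl fun v _ => Finset.mul_sum _ _ _
    _ = ∑ j₀ : Fin K, ∏ j : Fin K, ∑ a : Fin q, wgt q p c a *
          (if j = j₀ then (if a = c then (1:ℝ) else 0) else (if a = c then (0:ℝ) else 1)) := by
        refine Finset.sum_congr rfl fun j₀ _ => ?_
        exact my_master (fun _ => wgt q p c)
          (fun j a => if j = j₀ then (if a = c then (1:ℝ) else 0) else (if a = c then (0:ℝ) else 1))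
    _ = ∑ j₀ : Fin K, ((1 - p) * p ^ (K - 1)) := by
        refine Finset.sum_congr rfl fun j₀ _ => ?_
        rw [← prod_if_single j₀ (1 - p) p]
        refine Finset.prod_congr rfl fun j _ => ?_
        by_cases hj : j = j₀
        · simp only [hj, if_pos rfl]
          exact wgt_sum_eqc c
        · simp only [hj, if_neg hj]
          exact wgt_sum_nec c hq
    _ = K * ((1 - p) * p ^ (K - 1)) := by
        rw [Finset.sum_const, Finset.card_univ, Fintype.card_fin, nsmul_eq_mul]

lemma prB_le (hq : 2 ≤ q) (hp0 : 0 ≤ p) (hp1 : p ≤ 1) (c : Fin q) :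
    ∑ v : Fin K → Fin q, (∏ j, wgt q p c (v j)) * (if IsErasureB c v then (1:ℝ) else 0)
      ≤ p ^ K := by
  have hind : ∀ v : Fin K → Fin q, (if IsErasureB c v then (1:ℝ) else 0) ≤
      ∏ j, (if v j = c then (0:ℝ) else 1) := by
    intro v
    split_ifs with hB
    · apply le_of_eq
      symm
      apply Finset.prod_eq_one
      intro j _
      simp [hB.2 j]
    · apply Finset.prod_nonneg
      intro j _
      split_ifs <;> norm_num
  calc ∑ v : Fin K → Fin q, (∏ j, wgt q p c (v j)) * (if IsErasureB c v then (1:ℝ) else 0)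
      ≤ ∑ v : Fin K → Fin q, (∏ j, wgt q p c (v j)) * ∏ j, (if v j = c then (0:ℝ) else 1) :=
        Finset.sum_le_sum fun v _ =>
          mul_le_mul_of_nonneg_left (hind v) (prodw_nonneg hq hp0 hp1 c v)
    _ = ∏ j : Fin K, ∑ a : Fin q, wgt q p c a * (if a = c then (0:ℝ) else 1) :=
        my_master (fun _ => wgt q p c) (fun _ a => if a = c then (0:ℝ) else 1)
    _ = p ^ K := by
        rw [Finset.prod_congr rfl fun j _ => wgt_sum_nec c hq, Finset.prod_const,
          Finset.card_univ, Fintype.card_fin]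

lemma prErr_le (hq : 2 ≤ q) (hp0 : 0 ≤ p) (hp1 : p ≤ 1) (c : Fin q) :
    ∑ v : Fin K → Fin q, (∏ j, wgt q p c (v j)) * (if IsError c v then (1:ℝ) else 0)
      ≤ K ^ 2 / ((q:ℝ) - 1) := by
  have hq1 : (0:ℝ) < (q:ℝ) - 1 := qsub1_pos hq
  have hind : ∀ v : Fin K → Fin q, (if IsError c v then (1:ℝ) else 0) ≤
      ∑ pr ∈ Finset.univ.offDiag, ∑ a ∈ Finset.univ.erase c,
        (if v pr.1 = a then (1:ℝ) else 0) * (if v pr.2 = a then (1:ℝ) else 0) := by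
    intro v
    have hnn : ∀ pr : Fin K × Fin K, ∀ a : Fin q,
        (0:ℝ) ≤ (if v pr.1 = a then (1:ℝ) else 0) * (if v pr.2 = a then (1:ℝ) else 0) :=
      fun pr a => mul_nonneg (ite01_nonneg _) (ite01_nonneg _)
    split_ifs with hE
    · obtain ⟨j, j', hne, heq, hnec⟩ := error_collision c v hE
      have hmem : (j, j') ∈ Finset.univ.offDiag :=
        Finset.mem_offDiag.mpr ⟨Finset.mem_univ _, Finset.mem_univ _, hne⟩
      have hamem : v j ∈ Finset.univ.erase c := Finset.mem_erase.mpr ⟨hnec, Finset.mem_univ _⟩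
      have hterm : (if v (j, j').1 = v j then (1:ℝ) else 0) *
          (if v (j, j').2 = v j then (1:ℝ) else 0) = 1 := by
        simp [heq.symm]
      calc (1:ℝ) = _ := hterm.symm
        _ ≤ ∑ a ∈ Finset.univ.erase c,
              (if v (j, j').1 = a then (1:ℝ) else 0) * (if v (j, j').2 = a then (1:ℝ) else 0) :=
            Finset.single_le_sum (fun a _ => hnn _ a) hamem
        _ ≤ _ := Finset.single_le_sum
            (f := fun pr => ∑ a ∈ Finset.univ.erase c,
              (if v pr.1 = a then (1:ℝ) else 0) * (if v pr.2 = a then (1:ℝ) else 0))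
            (fun pr _ => Finset.sum_nonneg fun a _ => hnn pr a) hmem
    · exact Finset.sum_nonneg fun pr _ => Finset.sum_nonneg fun a _ => hnn pr a
  calc ∑ v : Fin K → Fin q, (∏ j, wgt q p c (v j)) * (if IsError c v then (1:ℝ) else 0)
      ≤ ∑ v : Fin K → Fin q, (∏ j, wgt q p c (v j)) *
          ∑ pr ∈ Finset.univ.offDiag, ∑ a ∈ Finset.univ.erase c,
            (if v pr.1 = a then (1:ℝ) else 0) * (if v pr.2 = a then (1:ℝ) else 0) :=
        Finset.sum_le_sum fun v _ =>
          mul_le_mul_of_nonneg_left (hind v) (prodw_nonneg hq hp0 hp1 c v)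
    _ = ∑ pr ∈ Finset.univ.offDiag, ∑ a ∈ Finset.univ.erase c,
          ∑ v : Fin K → Fin q, (∏ j, wgt q p c (v j)) *
            ((if v pr.1 = a then (1:ℝ) else 0) * (if v pr.2 = a then (1:ℝ) else 0)) := by
        simp_rw [Finset.mul_sum]
        rw [Finset.sum_comm]
        exact Finset.sum_congr rfl fun pr _ => Finset.sum_comm
    _ = ∑ pr ∈ Finset.univ.offDiag, ∑ a ∈ Finset.univ.erase c,
          (p / ((q:ℝ) - 1)) ^ 2 := by
        refine Finset.sum_congr rfl fun pr hpr => Finset.sum_congr rfl fun a ha => ?_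
        have hne : pr.1 ≠ pr.2 := (Finset.mem_offDiag.mp hpr).2.2
        have hac : a ≠ c := (Finset.mem_erase.mp ha).1
        rw [my_marg2 (fun _ => wgt q p c) (fun _ => wgt_sum c hq) hne
          (fun b => if b = a then (1:ℝ) else 0) (fun b => if b = a then (1:ℝ) else 0),
          wgt_sum_eq c a]
        have hwa : wgt q p c a = p / ((q:ℝ) - 1) := by unfold wgt; rw [if_neg hac]
        rw [hwa]
        ring
    _ ≤ K ^ 2 / ((q:ℝ) - 1) := by
        rw [Finset.sum_const, Finset.sum_const, Finset.card_erase_of_mem (Finset.mem_univ _),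
          Finset.offDiag_card, Finset.card_univ, Finset.card_univ, Fintype.card_fin,
          Fintype.card_fin, nsmul_eq_mul, nsmul_eq_mul]
        have hq1' : 1 ≤ q := le_trans (by norm_num) hq
        have hcast : ((q - 1 : ℕ) : ℝ) = (q:ℝ) - 1 := by
          push_cast [Nat.cast_sub hq1']; ring
        have hp2 : p ^ 2 ≤ 1 := by nlinarith
        have h1 : ((q - 1 : ℕ) : ℝ) * (p / ((q:ℝ) - 1)) ^ 2 ≤ 1 / ((q:ℝ) - 1) := by
          rw [hcast, div_pow]
          have he : ((q:ℝ) - 1) * (p ^ 2 / ((q:ℝ) - 1) ^ 2) = p ^ 2 / ((q:ℝ) - 1) := by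
            field_simp
          rw [he]
          exact div_le_div₀ zero_le_one hp2 hq1 le_rfl
        have hKcast : ((K * K - K : ℕ) : ℝ) ≤ (K:ℝ) ^ 2 := by
          have : (K * K - K : ℕ) ≤ K * K := Nat.sub_le _ _
          calc ((K * K - K : ℕ) : ℝ) ≤ ((K * K : ℕ) : ℝ) := by exact_mod_cast this
            _ = (K:ℝ) ^ 2 := by push_cast; ring
        have hnn2 : (0:ℝ) ≤ ((q - 1 : ℕ) : ℝ) * (p / ((q:ℝ) - 1)) ^ 2 := by positivity
        calc ((K * K - K : ℕ) : ℝ) * (((q - 1:ℕ):ℝ) * (p / ((q:ℝ) - 1)) ^ 2)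
            ≤ (K:ℝ) ^ 2 * (1 / ((q:ℝ) - 1)) := by
              apply mul_le_mul hKcast h1 hnn2 (by positivity)
          _ = K ^ 2 / ((q:ℝ) - 1) := by ring

lemma perpos (hq : 2 ≤ q) (hp0 : 0 ≤ p) (hp1 : p ≤ 1) (c : Fin q) :
    ∑ v : Fin K → Fin q, (∏ j, wgt q p c (v j)) * Zfun c v
      ≤ p ^ K + (K:ℝ) * ((1 - p) * p ^ (K - 1)) + 2 * ((K:ℝ) ^ 2 / ((q:ℝ) - 1)) := by
  have hsplit : ∑ v : Fin K → Fin q, (∏ j, wgt q p c (v j)) * Zfun c v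
      = 2 * (∑ v : Fin K → Fin q, (∏ j, wgt q p c (v j)) * (if IsError c v then (1:ℝ) else 0))
        + (∑ v : Fin K → Fin q, (∏ j, wgt q p c (v j)) * (if IsErasureA c v then (1:ℝ) else 0))
        + (∑ v : Fin K → Fin q, (∏ j, wgt q p c (v j)) * (if IsErasureB c v then (1:ℝ) else 0)) := by
    rw [Finset.mul_sum, ← Finset.sum_add_distrib, ← Finset.sum_add_distrib]
    exact Finset.sum_congr rfl fun v _ => by unfold Zfun; ring
  rw [hsplit]
  have h1 := prErr_le (K := K) hq hp0 hp1 c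
  have h2 := prA_le (K := K) hq hp0 hp1 c
  have h3 := prB_le (K := K) hq hp0 hp1 c
  linarith

lemma e_nonneg (hq : 2 ≤ q) (hp0 : 0 ≤ p) (hp1 : p ≤ 1) (c : Fin q) :
    0 ≤ ∑ v : Fin K → Fin q, (∏ j, wgt q p c (v j)) * Zfun c v :=
  Finset.sum_nonneg fun v _ => mul_nonneg (prodw_nonneg hq hp0 hp1 c v) (Zfun_nonneg c v)

lemma m2_le (hq : 2 ≤ q) (hp0 : 0 ≤ p) (hp1 : p ≤ 1) (c : Fin q) :
    ∑ v : Fin K → Fin q, (∏ j, wgt q p c (v j)) * (Zfun c v) ^ 2 ≤ 4 := by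
  calc ∑ v : Fin K → Fin q, (∏ j, wgt q p c (v j)) * (Zfun c v) ^ 2
      ≤ ∑ v : Fin K → Fin q, (∏ j, wgt q p c (v j)) * 4 := by
        refine Finset.sum_le_sum fun v _ => ?_
        apply mul_le_mul_of_nonneg_left ?_ (prodw_nonneg hq hp0 hp1 c v)
        have h0 := Zfun_nonneg c v
        have h2 := Zfun_le_two c v
        nlinarith
    _ = 4 := by rw [← Finset.sum_mul, sum_prodw hq c, one_mul]

end prob

lemma numEvent_cast {qn K n : ℕ} (c : Fin n → Fin qn) (y : Fin n → Fin K → Fin qn)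
    (E : Fin qn → (Fin K → Fin qn) → Prop) :
    ((numEvent c y E : ℕ) : ℝ) = ∑ i, (if E (c i) (y i) then (1:ℝ) else 0) := by
  rw [numEvent, Finset.sum_boole]

set_option maxHeartbeats 1600000 in
lemma key_bound (K : ℕ) (hK : 2 ≤ K) (p R : ℝ) (hp0 : 0 < p) (hp1 : p < 1)
    (hR0 : 0 < R) (hR1 : R < 1) (δ : ℝ)
    (hδ : δ = 1 - R - (p ^ K + (K:ℝ) * (1 - p) * p ^ (K - 1))) (hδ0 : 0 < δ)
    (n qn : ℕ) (hn : 1 ≤ n) (hqK : K < qn) (hqn : 4 * (K:ℝ) ^ 2 / δ ≤ (qn:ℝ) - 1)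
    (c : Fin n → Fin qn) :
    1 - 16 / (δ ^ 2 * n) ≤
      (∑ y : Fin n → Fin K → Fin qn,
        (∏ i, ∏ j, (if y i j = c i then 1 - p else p / ((qn : ℝ) - 1))) *
          (if 2 * numEvent c y IsError + numEvent c y IsErasureA + numEvent c y IsErasureB
              ≤ n - Nat.ceil (R * (n:ℝ)) then (1:ℝ) else 0))
      ∧ (∑ y : Fin n → Fin K → Fin qn,
        (∏ i, ∏ j, (if y i j = c i then 1 - p else p / ((qn : ℝ) - 1))) *
          (if 2 * numEvent c y IsError + numEvent c y IsErasureA + numEvent c y IsErasureB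
              ≤ n - Nat.ceil (R * (n:ℝ)) then (1:ℝ) else 0)) ≤ 1 := by
  have hq2 : 2 ≤ qn := by omega
  have hnR : (0:ℝ) < n := by exact_mod_cast hn
  have hKR : (2:ℝ) ≤ K := by exact_mod_cast hK
  -- fold weights
  have hW : ∀ y : Fin n → Fin K → Fin qn,
      (∏ i, ∏ j, (if y i j = c i then 1 - p else p / ((qn : ℝ) - 1)))
        = ∏ i, ∏ j, wgt qn p (c i) (y i j) := fun y => rfl
  simp only [hW]
  set u : Fin n → (Fin K → Fin qn) → ℝ := fun i v => ∏ j, wgt qn p (c i) (v j) with hu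
  have hfold : ∀ y : Fin n → Fin K → Fin qn,
      (∏ i, ∏ j, wgt qn p (c i) (y i j)) = ∏ i, u i (y i) := fun y => rfl
  simp only [hfold]
  set m : ℕ := n - Nat.ceil (R * (n:ℝ)) with hm
  set natS : (Fin n → Fin K → Fin qn) → ℕ := fun y =>
    2 * numEvent c y IsError + numEvent c y IsErasureA + numEvent c y IsErasureB with hnatS
  have hcond : ∀ y : Fin n → Fin K → Fin qn,
      2 * numEvent c y IsError + numEvent c y IsErasureA + numEvent c y IsErasureB
        = natS y := fun y => rfl
  simp only [hcond]
  have hu1 : ∀ i, ∑ v, u i v = 1 := fun i => sum_prodw hq2 (c i)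
  have hunn : ∀ i v, 0 ≤ u i v := fun i v => prodw_nonneg hq2 hp0.le hp1.le (c i) v
  have hWnn : ∀ y : Fin n → Fin K → Fin qn, 0 ≤ ∏ i, u i (y i) :=
    fun y => Finset.prod_nonneg fun i _ => hunn i (y i)
  have hW1 : ∑ y : Fin n → Fin K → Fin qn, ∏ i, u i (y i) = 1 := by
    calc ∑ y : Fin n → Fin K → Fin qn, ∏ i, u i (y i)
        = ∑ y : Fin n → Fin K → Fin qn, (∏ i, u i (y i)) * ∏ i : Fin n, (1:ℝ) := by simp
      _ = ∏ i, ∑ v, u i v * 1 := my_master u (fun _ _ => 1)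
      _ = 1 := by simp [hu1]
  set e : Fin n → ℝ := fun i => ∑ v, u i v * Zfun (c i) v with he
  set ES : ℝ := ∑ i, e i with hES
  set S : (Fin n → Fin K → Fin qn) → ℝ := fun y => ∑ i, Zfun (c i) (y i) with hS
  set μ' : ℝ := p ^ K + (K:ℝ) * ((1 - p) * p ^ (K - 1)) with hμ'
  -- per-position bounds
  have he0 : ∀ i, 0 ≤ e i := fun i => e_nonneg hq2 hp0.le hp1.le (c i)
  have hqδ : (0:ℝ) < (qn:ℝ) - 1 := qsub1_pos hq2
  have he_le : ∀ i, e i ≤ μ' + δ / 2 := by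
    intro i
    have h1 := perpos (K := K) hq2 hp0.le hp1.le (c i)
    have h2 : 2 * ((K:ℝ) ^ 2 / ((qn:ℝ) - 1)) ≤ δ / 2 := by
      have hKpos : (0:ℝ) < (K:ℝ) ^ 2 := by positivity
      have hb : (0:ℝ) < 4 * (K:ℝ) ^ 2 / δ := by positivity
      have : (K:ℝ) ^ 2 / ((qn:ℝ) - 1) ≤ (K:ℝ) ^ 2 / (4 * (K:ℝ) ^ 2 / δ) :=
        div_le_div_of_nonneg_left (le_of_lt hKpos) hb hqn
      have heq : (K:ℝ) ^ 2 / (4 * (K:ℝ) ^ 2 / δ) = δ / 4 := by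
        field_simp
      rw [heq] at this
      linarith
    exact le_trans h1 (by linarith)
  have hES_le : ES ≤ n * (μ' + δ / 2) := by
    rw [hES]
    calc ∑ i, e i ≤ ∑ i : Fin n, (μ' + δ / 2) := Finset.sum_le_sum fun i _ => he_le i
      _ = n * (μ' + δ / 2) := by
          rw [Finset.sum_const, Finset.card_univ, Fintype.card_fin, nsmul_eq_mul]
  -- expectation of S
  have hESsum : ∑ y : Fin n → Fin K → Fin qn, (∏ i, u i (y i)) * S y = ES := by
    calc ∑ y : Fin n → Fin K → Fin qn, (∏ i, u i (y i)) * S y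
        = ∑ y : Fin n → Fin K → Fin qn, ∑ i, (∏ i', u i' (y i')) * Zfun (c i) (y i) :=
          Finset.sum_congr rfl fun y _ => Finset.mul_sum _ _ _
      _ = ∑ i, ∑ y : Fin n → Fin K → Fin qn, (∏ i', u i' (y i')) * Zfun (c i) (y i) :=
          Finset.sum_comm
      _ = ∑ i, e i := Finset.sum_congr rfl fun i _ => my_marg1 u hu1 i (Zfun (c i))
  -- second moment
  have hM2 : ∑ y : Fin n → Fin K → Fin qn, (∏ i, u i (y i)) * (S y) ^ 2
      = ∑ i, (∑ v, u i v * (Zfun (c i) v) ^ 2)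
        + ∑ pr ∈ Finset.univ.offDiag, e pr.1 * e pr.2 := by
    have hsq : ∀ y : Fin n → Fin K → Fin qn, (S y) ^ 2
        = ∑ pr ∈ (Finset.univ ×ˢ Finset.univ : Finset (Fin n × Fin n)),
            Zfun (c pr.1) (y pr.1) * Zfun (c pr.2) (y pr.2) := by
      intro y
      rw [sq, hS]
      rw [Finset.sum_mul_sum]
      rw [Finset.sum_product]
    calc ∑ y : Fin n → Fin K → Fin qn, (∏ i, u i (y i)) * (S y) ^ 2
        = ∑ y : Fin n → Fin K → Fin qn,
            ∑ pr ∈ (Finset.univ ×ˢ Finset.univ : Finset (Fin n × Fin n)),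
              (∏ i, u i (y i)) * (Zfun (c pr.1) (y pr.1) * Zfun (c pr.2) (y pr.2)) := by
          refine Finset.sum_congr rfl fun y _ => ?_
          rw [hsq y, Finset.mul_sum]
      _ = ∑ pr ∈ (Finset.univ ×ˢ Finset.univ : Finset (Fin n × Fin n)),
            ∑ y : Fin n → Fin K → Fin qn,
              (∏ i, u i (y i)) * (Zfun (c pr.1) (y pr.1) * Zfun (c pr.2) (y pr.2)) :=
          Finset.sum_comm
      _ = ∑ pr ∈ Finset.univ.diag ∪ Finset.univ.offDiag,
            ∑ y : Fin n → Fin K → Fin qn,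
              (∏ i, u i (y i)) * (Zfun (c pr.1) (y pr.1) * Zfun (c pr.2) (y pr.2)) := by
          rw [Finset.diag_union_offDiag]
      _ = ∑ pr ∈ Finset.univ.diag,
            (∑ y : Fin n → Fin K → Fin qn,
              (∏ i, u i (y i)) * (Zfun (c pr.1) (y pr.1) * Zfun (c pr.2) (y pr.2)))
          + ∑ pr ∈ Finset.univ.offDiag,
            (∑ y : Fin n → Fin K → Fin qn,
              (∏ i, u i (y i)) * (Zfun (c pr.1) (y pr.1) * Zfun (c pr.2) (y pr.2))) :=
          Finset.sum_union (Finset.disjoint_diag_offDiag _)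
      _ = ∑ i, (∑ v, u i v * (Zfun (c i) v) ^ 2)
          + ∑ pr ∈ Finset.univ.offDiag, e pr.1 * e pr.2 := by
          congr 1
          · rw [Finset.sum_diag]
            refine Finset.sum_congr rfl fun i _ => ?_
            rw [← my_marg1 u hu1 i (fun v => (Zfun (c i) v) ^ 2)]
            refine Finset.sum_congr rfl fun y _ => ?_
            show (∏ i', u i' (y i')) * (Zfun (c i) (y i) * Zfun (c i) (y i))
              = (∏ i', u i' (y i')) * (Zfun (c i) (y i)) ^ 2
            rw [sq]
          · refine Finset.sum_congr rfl fun pr hpr => ?_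
            have hne : pr.1 ≠ pr.2 := (Finset.mem_offDiag.mp hpr).2.2
            exact my_marg2 u hu1 hne (Zfun (c pr.1)) (Zfun (c pr.2))
  have hES2 : ES ^ 2 = ∑ i, (e i) ^ 2 + ∑ pr ∈ Finset.univ.offDiag, e pr.1 * e pr.2 := by
    calc ES ^ 2 = ∑ pr ∈ (Finset.univ ×ˢ Finset.univ : Finset (Fin n × Fin n)),
          e pr.1 * e pr.2 := by
          rw [sq, hES, Finset.sum_mul_sum, Finset.sum_product]
      _ = ∑ pr ∈ Finset.univ.diag, e pr.1 * e pr.2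
          + ∑ pr ∈ Finset.univ.offDiag, e pr.1 * e pr.2 := by
          rw [← Finset.diag_union_offDiag Finset.univ,
            Finset.sum_union (Finset.disjoint_diag_offDiag _)]
      _ = ∑ i, (e i) ^ 2 + ∑ pr ∈ Finset.univ.offDiag, e pr.1 * e pr.2 := by
          rw [Finset.sum_diag]
          simp [sq]
  -- variance bound
  have hVar : ∑ y : Fin n → Fin K → Fin qn, (∏ i, u i (y i)) * (S y - ES) ^ 2 ≤ 4 * n := by
    have hexp : ∀ y : Fin n → Fin K → Fin qn,
        (∏ i, u i (y i)) * (S y - ES) ^ 2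
          = (∏ i, u i (y i)) * (S y) ^ 2 - 2 * ES * ((∏ i, u i (y i)) * S y)
            + ES ^ 2 * (∏ i, u i (y i)) := fun y => by ring
    have h0 : ∑ y : Fin n → Fin K → Fin qn, (∏ i, u i (y i)) * (S y - ES) ^ 2
        = (∑ y : Fin n → Fin K → Fin qn, (∏ i, u i (y i)) * (S y) ^ 2)
          - 2 * ES * (∑ y : Fin n → Fin K → Fin qn, (∏ i, u i (y i)) * S y)
          + ES ^ 2 * (∑ y : Fin n → Fin K → Fin qn, ∏ i, u i (y i)) := by
      calc ∑ y : Fin n → Fin K → Fin qn, (∏ i, u i (y i)) * (S y - ES) ^ 2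
          = ∑ y : Fin n → Fin K → Fin qn, ((∏ i, u i (y i)) * (S y) ^ 2
              - 2 * ES * ((∏ i, u i (y i)) * S y) + ES ^ 2 * (∏ i, u i (y i))) :=
            Finset.sum_congr rfl fun y _ => hexp y
        _ = _ := by
            rw [Finset.sum_add_distrib, Finset.sum_sub_distrib,
              show (∑ y : Fin n → Fin K → Fin qn, 2 * ES * ((∏ i, u i (y i)) * S y))
                  = 2 * ES * ∑ y : Fin n → Fin K → Fin qn, (∏ i, u i (y i)) * S y from
                (Finset.mul_sum _ _ _).symm,
              show (∑ y : Fin n → Fin K → Fin qn, ES ^ 2 * ∏ i, u i (y i))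
                  = ES ^ 2 * ∑ y : Fin n → Fin K → Fin qn, ∏ i, u i (y i) from
                (Finset.mul_sum _ _ _).symm]
    rw [h0, hESsum, hM2, hW1]
    have hm2sum : ∑ i, (∑ v, u i v * (Zfun (c i) v) ^ 2) ≤ (n:ℝ) * 4 := by
      calc ∑ i, (∑ v, u i v * (Zfun (c i) v) ^ 2)
          ≤ ∑ i : Fin n, (4:ℝ) := Finset.sum_le_sum fun i _ => m2_le hq2 hp0.le hp1.le (c i)
        _ = (n:ℝ) * 4 := by
            rw [Finset.sum_const, Finset.card_univ, Fintype.card_fin, nsmul_eq_mul]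
    have hesq : 0 ≤ ∑ i, (e i) ^ 2 := Finset.sum_nonneg fun i _ => sq_nonneg _
    nlinarith [hES2]
  -- threshold
  have hceil_le : Nat.ceil (R * (n:ℝ)) ≤ n := by
    apply Nat.ceil_le.mpr
    nlinarith
  have hmcast : ((m:ℕ):ℝ) = (n:ℝ) - (Nat.ceil (R * (n:ℝ)) : ℝ) := by
    rw [hm, Nat.cast_sub hceil_le]
  have hm1 : (n:ℝ) * (1 - R) ≤ (m:ℝ) + 1 := by
    have h2 : ((Nat.ceil (R * (n:ℝ)) : ℕ):ℝ) < R * n + 1 :=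
      Nat.ceil_lt_add_one (by positivity)
    rw [hmcast]
    nlinarith
  set t : ℝ := (m:ℝ) + 1 - ES with htdef
  have ht : (n:ℝ) * (δ / 2) ≤ t := by
    have hμδ : μ' + δ / 2 = 1 - R - δ / 2 := by
      rw [hμ', hδ]
      ring
    rw [htdef]
    have := hES_le
    rw [hμδ] at this
    nlinarith
  have ht0 : 0 < t := lt_of_lt_of_le (by positivity) ht
  -- Chebyshev
  set natS : (Fin n → Fin K → Fin qn) → ℕ := fun y =>
    2 * numEvent c y IsError + numEvent c y IsErasureA + numEvent c y IsErasureB with hnatS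
  have hcast : ∀ y : Fin n → Fin K → Fin qn, ((natS y : ℕ) : ℝ) = S y := by
    intro y
    rw [hnatS, hS]
    push_cast
    rw [numEvent_cast c y IsError, numEvent_cast c y IsErasureA, numEvent_cast c y IsErasureB]
    rw [Finset.mul_sum, ← Finset.sum_add_distrib, ← Finset.sum_add_distrib]
    exact Finset.sum_congr rfl fun i _ => by unfold Zfun; ring
  set Fail : ℝ := ∑ y : Fin n → Fin K → Fin qn,
      (∏ i, u i (y i)) * (if m < natS y then (1:ℝ) else 0) with hFailDef
  have hFail0 : 0 ≤ Fail :=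
    Finset.sum_nonneg fun y _ => mul_nonneg (hWnn y) (ite01_nonneg _)
  have hGoalEq : ∑ y : Fin n → Fin K → Fin qn,
      (∏ i, u i (y i)) * (if natS y ≤ m then (1:ℝ) else 0) = 1 - Fail := by
    have h1 : (∑ y : Fin n → Fin K → Fin qn,
          (∏ i, u i (y i)) * (if natS y ≤ m then (1:ℝ) else 0))
        + (∑ y : Fin n → Fin K → Fin qn,
          (∏ i, u i (y i)) * (if m < natS y then (1:ℝ) else 0)) = 1 := by
      rw [← Finset.sum_add_distrib]
      calc ∑ y : Fin n → Fin K → Fin qn,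
            ((∏ i, u i (y i)) * (if natS y ≤ m then (1:ℝ) else 0)
              + (∏ i, u i (y i)) * (if m < natS y then (1:ℝ) else 0))
          = ∑ y : Fin n → Fin K → Fin qn, ∏ i, u i (y i) := by
            refine Finset.sum_congr rfl fun y _ => ?_
            rcases le_or_gt (natS y) m with h | h
            · rw [if_pos h, if_neg (not_lt.mpr h)]
              ring
            · rw [if_neg (not_le.mpr h), if_pos h]
              ring
        _ = 1 := hW1
    rw [hFailDef]
    linarith
  have hcheb : Fail * t ^ 2 ≤ 4 * n := by
    calc Fail * t ^ 2
        = ∑ y : Fin n → Fin K → Fin qn,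
            ((∏ i, u i (y i)) * (if m < natS y then (1:ℝ) else 0)) * t ^ 2 := by
          rw [hFailDef, Finset.sum_mul]
      _ ≤ ∑ y : Fin n → Fin K → Fin qn, (∏ i, u i (y i)) * (S y - ES) ^ 2 := by
          refine Finset.sum_le_sum fun y _ => ?_
          by_cases h : m < natS y
          · rw [if_pos h, mul_one]
            have h1 : (m:ℝ) + 1 ≤ S y := by
              have hh : m + 1 ≤ natS y := h
              calc (m:ℝ) + 1 = ((m + 1 : ℕ):ℝ) := by push_cast; ring
                _ ≤ ((natS y : ℕ):ℝ) := by exact_mod_cast hh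
                _ = S y := hcast y
            have h2 : t ≤ S y - ES := by rw [htdef]; linarith
            have h3 : t ^ 2 ≤ (S y - ES) ^ 2 := by nlinarith
            exact mul_le_mul_of_nonneg_left h3 (hWnn y)
          · rw [if_neg h, mul_zero, zero_mul]
            exact mul_nonneg (hWnn y) (sq_nonneg _)
      _ ≤ 4 * n := hVar
  have hFail_le : Fail ≤ 16 / (δ ^ 2 * n) := by
    have htsq : (0:ℝ) < t ^ 2 := by positivity
    have h1 : Fail ≤ 4 * n / t ^ 2 := by
      rw [le_div_iff₀ htsq]
      exact hcheb
    have hnd : (0:ℝ) < ((n:ℝ) * (δ / 2)) ^ 2 := by positivity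
    have h2 : 4 * (n:ℝ) / t ^ 2 ≤ 4 * n / (((n:ℝ) * (δ / 2)) ^ 2) := by
      apply div_le_div_of_nonneg_left (by positivity) hnd
      exact pow_le_pow_left₀ (by positivity) ht 2
    have h3 : 4 * (n:ℝ) / (((n:ℝ) * (δ / 2)) ^ 2) = 16 / (δ ^ 2 * n) := by
      field_simp
      ring
    linarith
  constructor
  · rw [hGoalEq]
    linarith
  · rw [hGoalEq]
    linarith

/-- Hard-decision majority decoding of an MDS code of dimension ⌈Rn⌉ succeeds with
probability tending to 1: for any R < 1 − p^K − K(1−p)p^{K−1}, any sequence of alphabet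
sizes q_n > K with q_n → ∞, and any transmitted words x^{(n)}, the probability that
2·Num_Error + Num_Erasure_A + Num_Erasure_B ≤ n − ⌈Rn⌉ tends to 1 as n → ∞. -/
theorem stmt17 (K : ℕ) (hK : 2 ≤ K) (p R : ℝ)
    (hp : p ∈ Set.Ioo (0 : ℝ) 1) (hR : R ∈ Set.Ioo (0 : ℝ) 1)
    (hRlt : R < 1 - p ^ K - (K : ℝ) * (1 - p) * p ^ (K - 1))
    (q : ℕ → ℕ) (hqK : ∀ n, K < q n) (hq : Filter.Tendsto q Filter.atTop Filter.atTop)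
    (x : (n : ℕ) → Fin n → Fin (q n)) :
    Filter.Tendsto
      (fun n : ℕ =>
        ∑ y : Fin n → Fin K → Fin (q n),
          (∏ i : Fin n, ∏ j : Fin K,
              (if y i j = x n i then 1 - p else p / ((q n : ℝ) - 1))) *
            (if 2 * numEvent (x n) y IsError + numEvent (x n) y IsErasureA +
                  numEvent (x n) y IsErasureB ≤ n - Nat.ceil (R * (n : ℝ))
              then (1 : ℝ) else 0))
      Filter.atTop (nhds 1) := by
  obtain ⟨hp0, hp1⟩ := hp
  obtain ⟨hR0, hR1⟩ := hR
  set δ : ℝ := 1 - R - (p ^ K + (K:ℝ) * (1 - p) * p ^ (K - 1)) with hδ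
  have hδ0 : 0 < δ := by rw [hδ]; linarith
  have hqev : ∀ᶠ n in Filter.atTop, 4 * (K:ℝ) ^ 2 / δ ≤ (q n : ℝ) - 1 := by
    have h := hq.eventually (Filter.eventually_ge_atTop (Nat.ceil (4 * (K:ℝ) ^ 2 / δ) + 1))
    filter_upwards [h] with n hn
    have h1 : (4 * (K:ℝ) ^ 2 / δ) ≤ Nat.ceil (4 * (K:ℝ) ^ 2 / δ) := Nat.le_ceil _
    have h2 : ((Nat.ceil (4 * (K:ℝ) ^ 2 / δ) + 1 : ℕ) : ℝ) ≤ q n := by exact_mod_cast hn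
    push_cast at h2
    linarith
  have hnev : ∀ᶠ n : ℕ in Filter.atTop, 1 ≤ n := Filter.eventually_ge_atTop 1
  have hbound : ∀ᶠ n in Filter.atTop,
      (1 - 16 / (δ ^ 2 * n) ≤
        (∑ y : Fin n → Fin K → Fin (q n),
          (∏ i : Fin n, ∏ j : Fin K,
              (if y i j = x n i then 1 - p else p / ((q n : ℝ) - 1))) *
            (if 2 * numEvent (x n) y IsError + numEvent (x n) y IsErasureA +
                  numEvent (x n) y IsErasureB ≤ n - Nat.ceil (R * (n : ℝ))
              then (1 : ℝ) else 0))
      ∧ (∑ y : Fin n → Fin K → Fin (q n),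
          (∏ i : Fin n, ∏ j : Fin K,
              (if y i j = x n i then 1 - p else p / ((q n : ℝ) - 1))) *
            (if 2 * numEvent (x n) y IsError + numEvent (x n) y IsErasureA +
                  numEvent (x n) y IsErasureB ≤ n - Nat.ceil (R * (n : ℝ))
              then (1 : ℝ) else 0)) ≤ 1) := by
    filter_upwards [hqev, hnev] with n h1 h2
    exact key_bound K hK p R hp0 hp1 hR0 hR1 δ hδ hδ0 n (q n) h2 (hqK n) h1 (x n)
  have hlow : Filter.Tendsto (fun n : ℕ => 1 - 16 / (δ ^ 2 * n)) Filter.atTop (nhds 1) := by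
    have h0 : Filter.Tendsto (fun n : ℕ => 16 / (δ ^ 2 * (n:ℝ))) Filter.atTop (nhds 0) := by
      apply Filter.Tendsto.div_atTop (tendsto_const_nhds)
      exact Filter.Tendsto.const_mul_atTop (by positivity) tendsto_natCast_atTop_atTop
    have h1 : Filter.Tendsto (fun _ : ℕ => (1:ℝ)) Filter.atTop (nhds 1) := tendsto_const_nhds
    simpa using h1.sub h0
  exact tendsto_of_tendsto_of_tendsto_of_le_of_le' hlow tendsto_const_nhds
    (hbound.mono fun n h => h.1) (hbound.mono fun n h => h.2)
end
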